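/- arXiv:1903.09851 — 6 statements merged into one kernel-verified Lean document; each statement's English description precedes it below -/
import Mathlib

section
/- Let p = 2. A 2-regular partition λ of n has exactly one normal node (i.e., is a Jantzen–Seitz partition) if and only if all of its nonzero parts have the same parity. -/
/-- Row `r` (0-indexed) of the partition `lam` has a removable node. -/
def RemovableRow (lam : ℕ → ℕ) (r : ℕ) : Prop := lam (r + 1) < lam r

/-- The residue mod 2 of the removable node at the end of row `r` (node `(r, lam r - 1)`
in 0-indexed matrix coordinates, residue `(col - row) mod 2`). -/
def remRes (lam : ℕ → ℕ) (r : ℕ) : ℕ := (lam r + r + 1) % 2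

/-- Row `r` (0-indexed) of the partition `lam` has an addable node. -/
def AddableRow (lam : ℕ → ℕ) (r : ℕ) : Prop := r = 0 ∨ lam r < lam (r - 1)

/-- The residue mod 2 of the addable node at the end of row `r`. -/
def addRes (lam : ℕ → ℕ) (r : ℕ) : ℕ := (lam r + r) % 2

/-- The removable node in row `r` is normal: every addable node of the same residue strictly
above it can be matched injectively with removable nodes of that residue lying strictly
between them (Hall-type condition). -/
def IsNormalRow (lam : ℕ → ℕ) (r : ℕ) : Prop :=
  RemovableRow lam r ∧
  ∀ q < r,
    {t | q ≤ t ∧ t < r ∧ AddableRow lam t ∧ addRes lam t = remRes lam r}.ncard ≤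
    {t | q < t ∧ t < r ∧ RemovableRow lam t ∧ remRes lam t = remRes lam r}.ncard

/-- For `p = 2`, a 2-regular partition of `n` has exactly one normal node (i.e. is
Jantzen–Seitz) if and only if all of its nonzero parts have the same parity. -/
theorem stmt_1 (n : ℕ) (hpos : 0 < n) (lam : ℕ → ℕ)
    (hdec : ∀ j, lam (j + 1) ≤ lam j)
    (hreg : ∀ j, lam (j + 1) ≠ 0 → lam (j + 1) < lam j)
    (hsum : ∑ j ∈ Finset.range n, lam j = n) :
    (∃! r, IsNormalRow lam r) ↔ ∀ j, lam (j + 1) ≠ 0 → lam j % 2 = lam (j + 1) % 2 := by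
  classical
  have hanti : ∀ a b : ℕ, a ≤ b → lam b ≤ lam a :=
    fun a b h => antitone_nat_of_succ_le hdec h
  have hlam0 : 0 < lam 0 := by
    by_contra h
    push_neg at h
    have hz : ∀ j ∈ Finset.range n, lam j = 0 := by
      intro j _
      have := hanti 0 j (Nat.zero_le _)
      omega
    rw [Finset.sum_congr rfl hz] at hsum
    simp at hsum
    omega
  have hrem0 : RemovableRow lam 0 := by
    unfold RemovableRow
    rcases Nat.eq_zero_or_pos (lam (0 + 1)) with h | h
    · omega
    · exact hreg 0 (by omega)
  have hnorm0 : IsNormalRow lam 0 :=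
    ⟨hrem0, fun q hq => absurd hq (Nat.not_lt_zero q)⟩
  constructor
  · intro huniq
    by_contra hJS
    push_neg at hJS
    have hex : ∃ j, lam (j + 1) ≠ 0 ∧ lam j % 2 ≠ lam (j + 1) % 2 := hJS
    obtain ⟨j, hPj, hmin⟩ :
        ∃ j, (lam (j + 1) ≠ 0 ∧ lam j % 2 ≠ lam (j + 1) % 2) ∧
          ∀ m, m < j → ¬(lam (m + 1) ≠ 0 ∧ lam m % 2 ≠ lam (m + 1) % 2) :=
      ⟨Nat.find hex, Nat.find_spec hex, fun m hm => Nat.find_min hex hm⟩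
    have hchain : ∀ m, m < j → lam m % 2 = lam (m + 1) % 2 := by
      intro m hm
      have h1 := hmin m hm
      push_neg at h1
      have h2 : lam (m + 1) ≠ 0 := by
        have := hanti (m + 1) (j + 1) (by omega)
        have := hPj.1
        omega
      exact h1 h2
    have hnormj : IsNormalRow lam (j + 1) := by
      constructor
      · unfold RemovableRow
        have h1 : lam (j + 1) ≠ 0 := hPj.1
        rcases Nat.eq_zero_or_pos (lam (j + 1 + 1)) with h | h
        · omega
        · exact hreg (j + 1) (by omega)
      · intro q hq
        have hinj : Function.Injective (fun t : ℕ => t + 1) := add_left_injective 1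
        apply le_trans (le_of_eq (Set.ncard_image_of_injective _ hinj).symm)
        apply Set.ncard_le_ncard
        · rintro x ⟨t, ht, rfl⟩
          show t + 1 ∈ _
          simp only [Set.mem_setOf_eq] at ht ⊢
          obtain ⟨hqt, htj, hadd, hres⟩ := ht
          simp only [addRes, remRes] at hres
          have htne : t ≠ j := by
            intro h
            subst h
            have := hPj.2
            omega
          have htlt : t < j := by omega
          have hch := hchain t htlt
          have hlp : 0 < lam (t + 1) := by
            have h1 := hanti (t + 1) (j + 1) (by omega)
            have h2 := hPj.1
            omega
          refine ⟨by omega, by omega, ?_, ?_⟩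
          · unfold RemovableRow
            rcases Nat.eq_zero_or_pos (lam (t + 1 + 1)) with h | h
            · omega
            · exact hreg (t + 1) (by omega)
          · simp only [remRes]
            omega
        · exact (Set.finite_lt_nat (j + 1)).subset (fun x hx => hx.2.1)
    obtain ⟨r0, _, huni⟩ := huniq
    have h0 : (0 : ℕ) = r0 := huni 0 hnorm0
    have h1 : j + 1 = r0 := huni (j + 1) hnormj
    omega
  · intro hJS
    refine ⟨0, hnorm0, ?_⟩
    intro r hr
    by_contra hr0
    have hr1 : 1 ≤ r := Nat.one_le_iff_ne_zero.mpr hr0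
    have hlr : 0 < lam r := by
      have := hr.1
      unfold RemovableRow at this
      omega
    have hineq := hr.2 (r - 1) (by omega)
    have hadd : AddableRow lam (r - 1) := by
      rcases Nat.eq_or_lt_of_le hr1 with h | h
      · left; omega
      · right
        have h2 : r - 1 - 1 + 1 = r - 1 := by omega
        have hl : lam (r - 1) ≠ 0 := by
          have := hanti (r - 1) r (by omega)
          omega
        have := hreg (r - 1 - 1) (by rw [h2]; exact hl)
        rw [h2] at this
        exact this
    have hpar : lam (r - 1) % 2 = lam r % 2 := by
      have h2 : r - 1 + 1 = r := by omega
      have := hJS (r - 1) (by rw [h2]; omega)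
      rw [h2] at this
      exact this
    have hS : {t | r - 1 ≤ t ∧ t < r ∧ AddableRow lam t ∧ addRes lam t = remRes lam r}
        = {r - 1} := by
      ext t
      simp only [Set.mem_setOf_eq, Set.mem_singleton_iff]
      constructor
      · rintro ⟨h1, h2, _, _⟩
        omega
      · rintro rfl
        refine ⟨le_refl _, by omega, hadd, ?_⟩
        simp only [addRes, remRes]
        omega
    have hT : {t | r - 1 < t ∧ t < r ∧ RemovableRow lam t ∧ remRes lam t = remRes lam r}
        = ∅ := by
      ext t
      simp only [Set.mem_setOf_eq, Set.mem_empty_iff_false, iff_false]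
      rintro ⟨h1, h2, _, _⟩
      omega
    rw [hS, hT] at hineq
    simp [Set.ncard_singleton, Set.ncard_empty] at hineq
end

section
/- Let p = 2, λ a 2-regular partition of n, and λ^{JS} defined by the iterative box-removal procedure. Then for every j ≥ 1, λ^{JS}_j − λ^{JS}_{j+1} ≤ 2·⌈(λ_j − λ_{j+1})/2⌉. -/
open Classical in
/-- One step of the JS-truncation procedure: comparing (0-indexed) rows `r` and `r+1`,
if row `r+1` is nonempty and has parity opposite to row `r`, remove one box from each of
rows `r+1, …, l`, where `l ≥ r+1` is minimal such that `μ_l > μ_{l+1} + 1` or `μ_{l+1} = 0`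
(the maximal consecutive block below row `r`). -/
noncomputable def jsStep (r : ℕ) (mu : ℕ → ℕ) : ℕ → ℕ :=
  if mu (r + 1) = 0 ∨ mu (r + 1) % 2 = mu r % 2 then mu
  else if h : ∃ l, r + 1 ≤ l ∧ (mu (l + 1) + 1 < mu l ∨ mu (l + 1) = 0) then
    fun j => if r + 1 ≤ j ∧ j ≤ Nat.find h then mu j - 1 else mu j
  else mu

/-- Iterating the JS-steps: `jsIter mu r` is the partition `λ^{r+1}` of the procedure. -/
noncomputable def jsIter (mu : ℕ → ℕ) : ℕ → ℕ → ℕ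
  | 0 => mu
  | r + 1 => jsStep r (jsIter mu r)

/-- The JS-truncation `λ^{JS}` of a 2-regular partition of `n` (the procedure stabilizes
after at most `n` steps). -/
noncomputable def jsPart (n : ℕ) (mu : ℕ → ℕ) : ℕ → ℕ := jsIter mu n

open Classical in
lemma block_pos (r : ℕ) (mu : ℕ → ℕ) (hpos : mu (r + 1) ≠ 0)
    (h : ∃ l, r + 1 ≤ l ∧ (mu (l + 1) + 1 < mu l ∨ mu (l + 1) = 0)) :
    ∀ k, r + 1 ≤ k → k ≤ Nat.find h → 0 < mu k := by
  intro k hk1 hk2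
  rcases Nat.lt_or_ge (r + 1) k with hlt | hge
  · obtain ⟨k', rfl⟩ : ∃ k', k = k' + 1 := ⟨k - 1, by omega⟩
    have hmin := Nat.find_min h (m := k') (by omega)
    push_neg at hmin
    have := hmin (by omega)
    omega
  · have : k = r + 1 := by omega
    subst this; omega

open Classical in
lemma jsStep_eq_of_le (r : ℕ) (mu : ℕ → ℕ) (j : ℕ) (hj : j ≤ r) :
    jsStep r mu j = mu j := by
  unfold jsStep
  split_ifs with h1 h2
  · rfl
  · exact if_neg (by omega)
  · rfl

lemma jsIter_stable (lam : ℕ → ℕ) (r s j : ℕ) (hjr : j ≤ r) (hrs : r ≤ s) :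
    jsIter lam s j = jsIter lam r j := by
  induction s, hrs using Nat.le_induction with
  | base => rfl
  | succ t ht ih =>
    show jsStep t (jsIter lam t) j = _
    rw [jsStep_eq_of_le t _ j (by omega), ih]

open Classical in
lemma jsIter_invariant (lam : ℕ → ℕ) (hdec : ∀ j, lam (j + 1) ≤ lam j) (r : ℕ) :
    (∀ j, jsIter lam r (j + 1) ≤ jsIter lam r j) ∧
    (∀ j, r ≤ j → jsIter lam r j - jsIter lam r (j + 1) ≤ lam j - lam (j + 1)) := by
  induction r with
  | zero => exact ⟨hdec, fun j _ => le_refl _⟩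
  | succ r ih =>
    obtain ⟨ih1, ih2⟩ := ih
    set mu := jsIter lam r with hmu
    show (∀ j, jsStep r mu (j+1) ≤ jsStep r mu j) ∧
      (∀ j, r + 1 ≤ j → jsStep r mu j - jsStep r mu (j+1) ≤ lam j - lam (j+1))
    by_cases c1 : mu (r + 1) = 0 ∨ mu (r + 1) % 2 = mu r % 2
    · unfold jsStep; rw [if_pos c1]
      exact ⟨ih1, fun j hj => ih2 j (by omega)⟩
    · by_cases h : ∃ l, r + 1 ≤ l ∧ (mu (l + 1) + 1 < mu l ∨ mu (l + 1) = 0)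
      · have hval : ∀ k, jsStep r mu k =
            if r + 1 ≤ k ∧ k ≤ Nat.find h then mu k - 1 else mu k := by
          intro k; unfold jsStep; rw [if_neg c1, dif_pos h]
        have hL1 : r + 1 ≤ Nat.find h := (Nat.find_spec h).1
        have hL2 : mu (Nat.find h + 1) + 1 < mu (Nat.find h) ∨ mu (Nat.find h + 1) = 0 :=
          (Nat.find_spec h).2
        have hbp : ∀ k, r + 1 ≤ k → k ≤ Nat.find h → 0 < mu k :=
          block_pos r mu (by push_neg at c1; exact c1.1) h
        set L := Nat.find h with hLdef
        constructor
        · intro j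
          rw [hval j, hval (j + 1)]
          by_cases hin : r + 1 ≤ j ∧ j ≤ L
          · by_cases hin1 : j + 1 ≤ L
            · rw [if_pos hin, if_pos ⟨by omega, hin1⟩]
              have := ih1 j; omega
            · -- j = L
              have hjL : j = L := by omega
              rw [if_pos hin, if_neg (by omega)]
              have hp : 0 < mu L := hbp L hL1 le_rfl
              subst hjL; omega
          · rw [if_neg hin]
            have h1 : ih1 j = ih1 j := rfl
            have := ih1 j
            split_ifs with h2
            · omega
            · omega
        · intro j hj
          rw [hval j, hval (j + 1)]
          by_cases hjL : j ≤ L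
          · by_cases hin1 : j + 1 ≤ L
            · rw [if_pos ⟨hj, hjL⟩, if_pos ⟨by omega, hin1⟩]
              have := ih2 j (by omega); omega
            · have hjL' : j = L := by omega
              rw [if_pos ⟨hj, hjL⟩, if_neg (by omega)]
              have := ih2 j (by omega); omega
          · rw [if_neg (by omega), if_neg (by omega)]
            exact ih2 j (by omega)
      · unfold jsStep; rw [if_neg c1, dif_neg h]
        exact ⟨ih1, fun j hj => ih2 j (by omega)⟩

/-- For every `j ≥ 1`, `λ^{JS}_j − λ^{JS}_{j+1} ≤ 2·⌈(λ_j − λ_{j+1})/2⌉`. -/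
theorem stmt_4 (n : ℕ) (hpos : 0 < n) (lam : ℕ → ℕ)
    (hdec : ∀ j, lam (j + 1) ≤ lam j)
    (hreg : ∀ j, lam (j + 1) ≠ 0 → lam (j + 1) < lam j)
    (hsum : ∑ j ∈ Finset.range n, lam j = n) :
    ∀ j : ℕ, jsPart n lam j - jsPart n lam (j + 1) ≤ 2 * ((lam j - lam (j + 1) + 1) / 2) := by
  intro j
  by_cases hjn : j < n
  · have hstab1 : jsPart n lam j = jsIter lam (j + 1) j :=
      jsIter_stable lam (j + 1) n j (by omega) (by omega)
    have hstab2 : jsPart n lam (j + 1) = jsIter lam (j + 1) (j + 1) :=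
      jsIter_stable lam (j + 1) n (j + 1) le_rfl (by omega)
    obtain ⟨inv1, inv2⟩ := jsIter_invariant lam hdec j
    set mu := jsIter lam j with hmu
    have hiter : jsIter lam (j + 1) = jsStep j mu := rfl
    rw [hstab1, hstab2, hiter]
    have hmono := inv1 j
    have hdiff := inv2 j le_rfl
    have hld := hdec j
    by_cases c1 : mu (j + 1) = 0 ∨ mu (j + 1) % 2 = mu j % 2
    · unfold jsStep; rw [if_pos c1]; omega
    · push_neg at c1
      by_cases h : ∃ l, j + 1 ≤ l ∧ (mu (l + 1) + 1 < mu l ∨ mu (l + 1) = 0)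
      · have hL1 : j + 1 ≤ Nat.find h := (Nat.find_spec h).1
        have hv1 : jsStep j mu j = mu j := by
          unfold jsStep; rw [if_neg (by push_neg; exact c1), dif_pos h,
            if_neg (by omega)]
        have hv2 : jsStep j mu (j + 1) = mu (j + 1) - 1 := by
          unfold jsStep; rw [if_neg (by push_neg; exact c1), dif_pos h,
            if_pos ⟨le_rfl, hL1⟩]
        rw [hv1, hv2]
        have hne := c1.1
        have hpar := c1.2
        omega
      · unfold jsStep
        rw [if_neg (by push_neg; exact c1), dif_neg h]
        omega
  · obtain ⟨_, inv2⟩ := jsIter_invariant lam hdec n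
    have := inv2 j (by omega)
    have := hdec j
    show jsIter lam n j - jsIter lam n (j + 1) ≤ _
    omega
end

section
/- Let n ≥ 5, p = 2, and let λ be a partition in the set P^A_2(n) := { dbl(μ) : μ a 2-regular partition of n with no part ≡ 2 (mod 4) } ∩ {2-regular partitions of n}. Then λ has at least 3 nonzero parts unless n ≢ 2 (mod 4) and λ = β_n. -/
def betaList (m : ℕ) : List ℕ :=
  if m % 2 = 0 then [m / 2 + 1, m / 2 - 1] else [(m + 1) / 2, (m - 1) / 2]

def dblList (l : List ℕ) : List ℕ := (l.map betaList).flatten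

lemma betaList_length (m : ℕ) : (betaList m).length = 2 := by
  unfold betaList; split <;> rfl

lemma beta_two {m : ℕ} (hm : 2 ≤ m) (h4 : m % 4 ≠ 2) :
    ((betaList m).filter (· != 0)).length = 2 := by
  have h : (betaList m).filter (· != 0) = betaList m := by
    apply List.filter_eq_self.2
    intro a ha
    unfold betaList at ha
    split at ha <;> simp_all <;> omega
  rw [h, betaList_length]

lemma beta_one {m : ℕ} (hm : 0 < m) :
    1 ≤ ((betaList m).filter (· != 0)).length := by
  unfold betaList
  split
  · have h : (m / 2 + 1) ∈ List.filter (· != 0) [m / 2 + 1, m / 2 - 1] := by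
      simp [List.mem_filter]
    exact List.length_pos_iff.mpr (List.ne_nil_of_mem h)
  · have h : ((m + 1) / 2) ∈ List.filter (· != 0) [(m + 1) / 2, (m - 1) / 2] := by
      simp [List.mem_filter]; omega
    exact List.length_pos_iff.mpr (List.ne_nil_of_mem h)

lemma dblList_cons (a : ℕ) (l : List ℕ) :
    dblList (a :: l) = betaList a ++ dblList l := by
  simp [dblList]

/-- If `n ≥ 5` and `λ ∈ P^A_2(n)`, i.e. `λ` is a 2-regular partition of `n` which is the double
of a 2-regular partition with no part `≡ 2 (mod 4)`, then `λ` has at least 3 nonzero parts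
unless `n ≢ 2 (mod 4)` and `λ = β_n`. -/
theorem stmt_7 (n : ℕ) (hn : 5 ≤ n) (lam : List ℕ)
    (hreg : (lam.filter (· != 0)).Nodup)
    (hdecr : List.Chain' (· ≥ ·) lam) (hlsum : lam.sum = n)
    (hA : ∃ mu : List ℕ, List.Chain' (· > ·) mu ∧ (∀ x ∈ mu, 0 < x) ∧
      (∀ x ∈ mu, x % 4 ≠ 2) ∧ mu.sum = n ∧ lam = dblList mu) :
    3 ≤ (lam.filter (· != 0)).length ∨ (n % 4 ≠ 2 ∧ lam = betaList n) := by
  obtain ⟨mu, hchain, hpos, h4, hsum, hlam⟩ := hA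
  match mu with
  | [] => simp at hsum; omega
  | [m] =>
    right
    simp at hsum
    subst hsum
    constructor
    · exact h4 m (by simp)
    · rw [hlam, dblList_cons]
      simp [dblList]
  | a :: b :: rest =>
    left
    have hab : a > b := (List.isChain_cons_cons.1 hchain).1
    have hb : 0 < b := hpos b (by simp)
    have ha4 : a % 4 ≠ 2 := h4 a (by simp)
    have ha2 : ((betaList a).filter (· != 0)).length = 2 :=
      beta_two (by omega) ha4
    have hb1 : 1 ≤ ((betaList b).filter (· != 0)).length := beta_one hb
    rw [hlam, dblList_cons, dblList_cons]
    simp only [List.filter_append, List.length_append]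
    omega
end

section
/- Let λ ∈ P_3(n) be a 3-regular partition fixed by the Mullineux map, with Mullineux symbol columns (a_0,…,a_k; r_0,…,r_k) satisfying: (a_k, r_k) = (1,1), and for 0 ≤ j < k, if (a_{j+1}, r_{j+1}) = (6c+1, 3c+1) then (a_j, r_j) = (6(c+1)−1, 3(c+1)), and if (a_{j+1}, r_{j+1}) ∈ {(6c−1, 3c), (6c, 3c)} then (a_j, r_j) ∈ {(6c, 3c), (6c+1, 3c+1)}. If h(λ) = r_0 = 3c then n = a_0 + ⋯ + a_k ≥ 6c² = 2c·h(λ), and if h(λ) = 3c+1 then n ≥ 6c² + 6c + 1 ≥ 2c·h(λ). -/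
/-!
Read the symbol from its last column `(1, 1)` backwards. Every column is `(6c+1, 3c+1)`,
`(6c-1, 3c)` or `(6c, 3c)`, and the tail of the symbol starting at it has size at least
`6c² + 6c + 1`, resp. `6c²`. The constraints preserve this: `(6c+1, 3c+1)` is preceded by
`(6c+5, 3c+3)` and `6c² + 6c + 1 + (6c + 5) = 6(c+1)²`, while `(6c-1, 3c)` and `(6c, 3c)` are
preceded by `(6c, 3c)` or `(6c+1, 3c+1)`, which adds at least `6c`.
-/

def MullineuxTailBound (a r s : ℕ) : Prop :=
  ∃ c : ℕ, (a = 6 * c + 1 ∧ r = 3 * c + 1 ∧ 6 * c ^ 2 + 6 * c + 1 ≤ s) ∨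
    ((a = 6 * c - 1 ∨ a = 6 * c) ∧ r = 3 * c ∧ 6 * c ^ 2 ≤ s)

namespace MullineuxTailBound

theorem one_one : MullineuxTailBound 1 1 1 :=
  ⟨0, Or.inl ⟨rfl, rfl, le_rfl⟩⟩

theorem cons {a r a' r' s : ℕ}
    (hstep1 : ∀ c : ℕ, a = 6 * c + 1 ∧ r = 3 * c + 1 → a' = 6 * (c + 1) - 1 ∧ r' = 3 * (c + 1))
    (hstep2 : ∀ c : ℕ, (a = 6 * c - 1 ∧ r = 3 * c) ∨ (a = 6 * c ∧ r = 3 * c) →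
      (a' = 6 * c ∧ r' = 3 * c) ∨ (a' = 6 * c + 1 ∧ r' = 3 * c + 1))
    (h : MullineuxTailBound a r s) : MullineuxTailBound a' r' (a' + s) := by
  obtain ⟨c, ⟨ha, hr, hs⟩ | ⟨ha, hr, hs⟩⟩ := h
  · obtain ⟨ha', hr'⟩ := hstep1 c ⟨ha, hr⟩
    refine ⟨c + 1, Or.inr ⟨Or.inl ha', hr', ?_⟩⟩
    have hsq : 6 * (c + 1) ^ 2 = 6 * c ^ 2 + 6 * c + 1 + (6 * c + 5) := by ring
    omega
  · rcases hstep2 c (ha.imp (⟨·, hr⟩) (⟨·, hr⟩)) with ⟨ha', hr'⟩ | ⟨ha', hr'⟩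
    · exact ⟨c, Or.inr ⟨Or.inr ha', hr', by omega⟩⟩
    · exact ⟨c, Or.inl ⟨ha', hr', by omega⟩⟩

theorem le_of_eq_three_mul {a r s c : ℕ} (h : MullineuxTailBound a r s) (hr : r = 3 * c) :
    6 * c ^ 2 ≤ s := by
  obtain ⟨c', ⟨-, hr', -⟩ | ⟨-, hr', hs⟩⟩ := h
  · omega
  · obtain rfl : c' = c := by omega
    exact hs

theorem le_of_eq_three_mul_add_one {a r s c : ℕ} (h : MullineuxTailBound a r s)
    (hr : r = 3 * c + 1) : 6 * c ^ 2 + 6 * c + 1 ≤ s := by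
  obtain ⟨c', ⟨-, hr', hs⟩ | ⟨-, hr', -⟩⟩ := h
  · obtain rfl : c' = c := by omega
    exact hs
  · omega

end MullineuxTailBound

theorem mullineuxTailBound_of_le {k : ℕ} {a r : ℕ → ℕ} (hak : a k = 1) (hrk : r k = 1)
    (hstep1 : ∀ j < k, ∀ c : ℕ, a (j + 1) = 6 * c + 1 ∧ r (j + 1) = 3 * c + 1 →
      a j = 6 * (c + 1) - 1 ∧ r j = 3 * (c + 1))
    (hstep2 : ∀ j < k, ∀ c : ℕ,
      ((a (j + 1) = 6 * c - 1 ∧ r (j + 1) = 3 * c) ∨ (a (j + 1) = 6 * c ∧ r (j + 1) = 3 * c)) →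
      ((a j = 6 * c ∧ r j = 3 * c) ∨ (a j = 6 * c + 1 ∧ r j = 3 * c + 1)))
    {j : ℕ} (hj : j ≤ k) :
    MullineuxTailBound (a j) (r j) (∑ i ∈ Finset.Ico j (k + 1), a i) := by
  induction hj using Nat.decreasingInduction with
  | self =>
    rw [Finset.Ico_add_one_right_eq_Icc, Finset.Icc_self, Finset.sum_singleton, hak, hrk]
    exact MullineuxTailBound.one_one
  | of_succ j hjk ih =>
    rw [Finset.sum_eq_sum_Ico_succ_bot (by omega)]
    exact ih.cons (hstep1 j hjk) (hstep2 j hjk)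

/-- Arithmetic of the Mullineux symbol of a Mullineux-fixed 3-regular partition:
with `(a_k, r_k) = (1,1)` and the recursive constraints on consecutive columns,
if `h(λ) = r_0 = 3c` then `n = a_0 + ⋯ + a_k ≥ 6c² = 2c·h(λ)`, and if
`r_0 = 3c + 1` then `n ≥ 6c² + 6c + 1 ≥ 2c·h(λ)`. -/
theorem stmt_8 (k : ℕ) (a r : ℕ → ℕ)
    (hak : a k = 1) (hrk : r k = 1)
    (hstep1 : ∀ j < k, ∀ c : ℕ, a (j + 1) = 6 * c + 1 ∧ r (j + 1) = 3 * c + 1 →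
      a j = 6 * (c + 1) - 1 ∧ r j = 3 * (c + 1))
    (hstep2 : ∀ j < k, ∀ c : ℕ,
      ((a (j + 1) = 6 * c - 1 ∧ r (j + 1) = 3 * c) ∨ (a (j + 1) = 6 * c ∧ r (j + 1) = 3 * c)) →
      ((a j = 6 * c ∧ r j = 3 * c) ∨ (a j = 6 * c + 1 ∧ r j = 3 * c + 1)))
    (n : ℕ) (hn : n = ∑ j ∈ Finset.range (k + 1), a j) :
    (∀ c : ℕ, r 0 = 3 * c → 6 * c ^ 2 ≤ n ∧ 6 * c ^ 2 = 2 * c * r 0) ∧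
    (∀ c : ℕ, r 0 = 3 * c + 1 → (6 * c ^ 2 + 6 * c + 1 ≤ n ∧ 2 * c * r 0 ≤ 6 * c ^ 2 + 6 * c + 1)) := by
  have hbound : MullineuxTailBound (a 0) (r 0) n := by
    rw [hn, Finset.range_eq_Ico]
    exact mullineuxTailBound_of_le hak hrk hstep1 hstep2 (Nat.zero_le k)
  refine ⟨fun c hr => ⟨hbound.le_of_eq_three_mul hr, ?_⟩,
    fun c hr => ⟨hbound.le_of_eq_three_mul_add_one hr, ?_⟩⟩
  · rw [hr]; ring
  · rw [hr]; nlinarith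
end

section
/- Let n = ab ≥ 6 with a, b ≥ 2, F an algebraically closed field of characteristic p > 0, and G_{a,b} = (S_a ≀ S_b) ∩ A_n where S_a ≀ S_b ≤ S_n preserves the partition of {1,…,n} into b consecutive blocks of size a. Then the invariants (S_1^*)^{G_{a,b}} are zero, unless p = 2 and b = 2, in which case they are nonzero. -/
/-! An invariant class `[v]` satisfies `v ∘ σ = v + c_σ` for every `σ ∈ G_{a,b}`, with `c_σ`
a constant, and `c_σ = 0` as soon as `σ` fixes a point. Applied to `(x y)(u w)` with `u, w` in a
block other than that of `x, y` (which fixes a fifth point since `n ≥ 6`), this makes `v` constant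
on blocks. An even permutation exchanging two blocks `B_r, B_s` then gives
`v|_{B_s} = v|_{B_r} + c` and `v|_{B_r} = v|_{B_s} + c`; here `c = 0` because a third block is fixed
when `b ≥ 3`, and because `2c = 0` when `p ≠ 2`. So `v` is constant and `[v] = 0`.
When `p = 2` and `b = 2`, every `σ ∈ S_a ≀ S_2` fixes or exchanges the two blocks, so it changes
the indicator of the first block by `0` or by `1` everywhere, and that indicator gives a nonzero
invariant. -/

/-- `S_1^* = M_1 / ⟨v_1 + ⋯ + v_n⟩`. -/
abbrev S1quot (F : Type) [Field F] (n : ℕ) : Type :=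
  (Fin n → F) ⧸ (Submodule.span F {((fun _ => 1) : Fin n → F)})

/-- `σ ∈ S_n` preserves the partition of `{0, …, n−1}` into `b` consecutive blocks of size `a`
(block of `x` is `⌊x/a⌋`), i.e. `σ ∈ S_a ≀ S_b`. -/
def wreathPres (n a : ℕ) (σ : Equiv.Perm (Fin n)) : Prop :=
  ∀ x y : Fin n, ((x : ℕ) / a = (y : ℕ) / a) ↔ ((σ x : ℕ) / a = (σ y : ℕ) / a)

/-- `q ∈ S_1^*` is invariant under `G_{a,b} = (S_a ≀ S_b) ∩ A_n` (`n = ab`). -/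
def S1invW (F : Type) [Field F] (n a : ℕ) (q : S1quot F n) : Prop :=
  ∀ σ : Equiv.Perm (Fin n), σ ∈ alternatingGroup (Fin n) → wreathPres n a σ →
    ∀ v : Fin n → F, (Submodule.Quotient.mk v : S1quot F n) = q →
      (Submodule.Quotient.mk (v ∘ σ) : S1quot F n) = q

open Equiv Equiv.Perm

section Quotient

variable {F : Type} [Field F] {n a : ℕ}

theorem mk_eq_mk_iff_exists_const {v w : Fin n → F} :
    (Submodule.Quotient.mk v : S1quot F n) = Submodule.Quotient.mk w ↔
      ∃ c : F, ∀ x, v x = w x + c := by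
  rw [Submodule.Quotient.eq, Submodule.mem_span_singleton]
  refine ⟨fun ⟨c, hc⟩ => ⟨c, fun x => ?_⟩, fun ⟨c, hc⟩ => ⟨c, funext fun x => ?_⟩⟩
  · have := congrFun hc x
    simp only [Pi.smul_apply, Pi.sub_apply, smul_eq_mul, mul_one] at this
    rw [this]; ring
  · simp [hc x]

theorem mk_eq_zero_of_forall_eq {v : Fin n → F} (hv : ∀ x y, v x = v y) :
    (Submodule.Quotient.mk v : S1quot F n) = 0 := by
  rw [Submodule.Quotient.mk_eq_zero, Submodule.mem_span_singleton]
  rcases isEmpty_or_nonempty (Fin n) with _ | ⟨⟨x₀⟩⟩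
  · exact ⟨0, Subsingleton.elim _ _⟩
  · exact ⟨v x₀, funext fun x => by simp [hv x₀ x]⟩

theorem S1invW_mk_iff {v : Fin n → F} :
    S1invW F n a (Submodule.Quotient.mk v) ↔
      ∀ σ ∈ alternatingGroup (Fin n), wreathPres n a σ → ∃ c : F, ∀ x, v (σ x) = v x + c := by
  simp only [S1invW, mk_eq_mk_iff_exists_const, Function.comp_apply]
  refine ⟨fun h σ hσ hw => h σ hσ hw v ⟨0, by simp⟩, ?_⟩
  rintro h σ hσ hw v' ⟨c, hc⟩
  obtain ⟨d, hd⟩ := h σ hσ hw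
  exact ⟨d + c, fun x => by rw [hc, hd]; ring⟩

end Quotient

section Wreath

variable {n a : ℕ}

theorem wreathPres_mul {σ τ : Perm (Fin n)} (hσ : wreathPres n a σ) (hτ : wreathPres n a τ) :
    wreathPres n a (σ * τ) :=
  fun x y => (hτ x y).trans (hσ (τ x) (τ y))

theorem wreathPres_of_div_eq {σ : Perm (Fin n)} {π : ℕ → ℕ} (hπ : Function.Injective π)
    (h : ∀ x, (σ x : ℕ) / a = π (x / a)) : wreathPres n a σ :=
  fun x y => by rw [h, h, hπ.eq_iff]

theorem swap_div_eq {u w : Fin n} (huw : (u : ℕ) / a = w / a) (x : Fin n) :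
    (swap u w x : ℕ) / a = x / a := by
  rcases eq_or_ne x u with rfl | hu
  · simp [huw]
  rcases eq_or_ne x w with rfl | hw
  · simp [huw]
  rw [swap_apply_of_ne_of_ne hu hw]

end Wreath

section Blocks

variable {a b : ℕ}

def blockEquiv (a b : ℕ) : Fin b × Fin a ≃ Fin (a * b) :=
  finProdFinEquiv.trans (finCongr (Nat.mul_comm b a))

theorem blockEquiv_div (r : Fin b) (i : Fin a) : (blockEquiv a b (r, i) : ℕ) / a = r := by
  simp only [blockEquiv, finProdFinEquiv, trans_apply, coe_fn_mk, finCongr_apply, Fin.val_cast]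
  rw [Nat.add_mul_div_left _ _ i.pos, Nat.div_eq_of_lt i.isLt, zero_add]

theorem val_div_lt (x : Fin (a * b)) : (x : ℕ) / a < b :=
  Nat.div_lt_of_lt_mul x.isLt

theorem exists_ne_of_div_eq (ha : 2 ≤ a) {r : ℕ} (hr : r < b) :
    ∃ u w : Fin (a * b), u ≠ w ∧ (u : ℕ) / a = r ∧ (w : ℕ) / a = r :=
  ⟨blockEquiv a b (⟨r, hr⟩, ⟨0, by omega⟩), blockEquiv a b (⟨r, hr⟩, ⟨1, by omega⟩),
    by simp, blockEquiv_div _ _, blockEquiv_div _ _⟩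

def blockSwap (r s : Fin b) : Perm (Fin (a * b)) :=
  (blockEquiv a b).permCongr ((swap r s).prodCongr (Equiv.refl _))

theorem blockSwap_div (r s : Fin b) (x : Fin (a * b)) :
    (blockSwap r s x : ℕ) / a = swap (r : ℕ) s (x / a) := by
  obtain ⟨⟨t, i⟩, rfl⟩ := (blockEquiv a b).surjective x
  simp [blockSwap, permCongr_apply, blockEquiv_div, Fin.val_injective.swap_apply]

theorem exists_mem_alternatingGroup_div_eq (ha : 2 ≤ a) (hb : 0 < b) {σ : Perm (Fin (a * b))}
    {π : ℕ → ℕ} (h : ∀ x, (σ x : ℕ) / a = π (x / a)) :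
    ∃ τ ∈ alternatingGroup (Fin (a * b)), ∀ x, (τ x : ℕ) / a = π (x / a) := by
  obtain ⟨u, w, huw, hu, hw⟩ := exists_ne_of_div_eq ha hb
  rcases Int.units_eq_one_or (sign σ) with hs | hs
  · exact ⟨σ, mem_alternatingGroup.mpr hs, h⟩
  · refine ⟨σ * swap u w, ?_, fun x => ?_⟩
    · rw [mem_alternatingGroup, Perm.sign_mul, hs, sign_swap huw]; decide
    · rw [mul_apply, h, swap_div_eq (hu.trans hw.symm)]

end Blocks

namespace S1invW

variable {F : Type} [Field F] {a b : ℕ} {v : Fin (a * b) → F}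

theorem apply_eq_of_div_eq (ha : 2 ≤ a) (hb : 2 ≤ b) (hn : 6 ≤ a * b)
    (hv : S1invW F (a * b) a (Submodule.Quotient.mk v)) {x y : Fin (a * b)}
    (hxy : (x : ℕ) / a = y / a) : v x = v y := by
  rcases eq_or_ne x y with rfl | hne
  · rfl
  obtain ⟨r, hrb, hr⟩ : ∃ r < b, r ≠ (x : ℕ) / a := by
    by_contra! h
    have := h 0; have := h 1; omega
  obtain ⟨u, w, huw, hu, hw⟩ := exists_ne_of_div_eq ha hrb
  obtain ⟨z, -, hz⟩ := Finset.exists_mem_notMem_of_card_lt_card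
    (s := {x, y, u, w}) (t := Finset.univ) (Finset.card_le_four.trans_lt (by simp; omega))
  simp only [Finset.mem_insert, Finset.mem_singleton, not_or] at hz
  obtain ⟨hzx, hzy, hzu, hzw⟩ := hz
  have hux : u ≠ x := fun h => hr (h ▸ hu).symm
  have hwx : w ≠ x := fun h => hr (h ▸ hw).symm
  let σ := swap x y * swap u w
  have hσA : σ ∈ alternatingGroup (Fin (a * b)) := by
    rw [mem_alternatingGroup, Perm.sign_mul, sign_swap hne, sign_swap huw]; decide
  have hσW : wreathPres (a * b) a σ :=
    wreathPres_mul (wreathPres_of_div_eq Function.injective_id (swap_div_eq hxy))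
      (wreathPres_of_div_eq Function.injective_id (swap_div_eq (hu.trans hw.symm)))
  obtain ⟨c, hc⟩ := S1invW_mk_iff.mp hv σ hσA hσW
  have hc0 : c = 0 := by
    simpa [σ, swap_apply_of_ne_of_ne hzu hzw, swap_apply_of_ne_of_ne hzx hzy] using hc z
  simpa [σ, swap_apply_of_ne_of_ne hux.symm hwx.symm, hc0] using (hc x).symm

theorem apply_eq_of_forall_div_eq (ha : 2 ≤ a) (h2 : 3 ≤ b ∨ (2 : F) ≠ 0)
    (hv : S1invW F (a * b) a (Submodule.Quotient.mk v))
    (hblock : ∀ x y : Fin (a * b), (x : ℕ) / a = y / a → v x = v y) (x y : Fin (a * b)) :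
    v x = v y := by
  obtain ⟨τ, hτA, hτ⟩ := exists_mem_alternatingGroup_div_eq ha
    (Nat.zero_lt_of_lt (val_div_lt x))
    (blockSwap_div (a := a) ⟨_, val_div_lt x⟩ ⟨_, val_div_lt y⟩)
  obtain ⟨c, hc⟩ := S1invW_mk_iff.mp hv τ hτA (wreathPres_of_div_eq (swap _ _).injective hτ)
  have hyx : v y = v x + c := by
    rw [← hc x]; exact hblock _ _ (by simp [hτ])
  have hxy : v x = v y + c := by
    rw [← hc y]; exact hblock _ _ (by simp [hτ])
  suffices c = 0 by rw [hyx, this, add_zero]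
  rcases h2 with hb3 | h2
  · obtain ⟨m, hmb, hmx, hmy⟩ : ∃ m < b, m ≠ (x : ℕ) / a ∧ m ≠ (y : ℕ) / a := by
      by_contra! h
      have := h 0; have := h 1; have := h 2; omega
    obtain ⟨z, -, -, hz, -⟩ := exists_ne_of_div_eq ha hmb
    have hτz := hblock (τ z) z (by rw [hτ, hz]; exact swap_apply_of_ne_of_ne hmx hmy)
    simpa [hτz] using hc z
  · have h2c : 2 * c = 0 := by linear_combination -(hxy + hyx)
    exact (mul_eq_zero.mp h2c).resolve_left h2

theorem exists_ne_zero_of_two_eq_zero (ha : 2 ≤ a) (h2 : (2 : F) = 0) :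
    ∃ q : S1quot F (a * 2), q ≠ 0 ∧ S1invW F (a * 2) a q := by
  let v : Fin (a * 2) → F := fun x => if (x : ℕ) / a = 0 then 1 else 0
  have hv : ∀ x y : Fin (a * 2), v x + v y = if (x : ℕ) / a = y / a then 0 else 1 := by
    intro x y
    have hdiv (z : Fin (a * 2)) : (z : ℕ) / a = 0 ∨ (z : ℕ) / a = 1 :=
      Nat.le_one_iff_eq_zero_or_eq_one.mp (Nat.lt_succ_iff.mp (val_div_lt z))
    rcases hdiv x with hx | hx <;> rcases hdiv y with hy | hy <;>
      simp [v, hx, hy, one_add_one_eq_two, h2, -Nat.div_eq_zero_iff]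
  let x₀ : Fin (a * 2) := ⟨0, by omega⟩
  let x₁ : Fin (a * 2) := ⟨a, by omega⟩
  refine ⟨Submodule.Quotient.mk v, fun h0 => ?_, S1invW_mk_iff.mpr fun σ _ hσ => ?_⟩
  · obtain ⟨c, hc⟩ := (mk_eq_mk_iff_exists_const (w := 0)).mp h0
    have h01 := hv x₀ x₁
    simp [hc, x₀, x₁, Nat.div_self (by omega : 0 < a)] at h01
    exact one_ne_zero (by linear_combination -h01 + c * h2)
  · refine ⟨v x₀ + v (σ x₀), fun x => ?_⟩
    have e : v (σ x) + v (σ x₀) = v x + v x₀ := by simp only [hv, hσ x x₀]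
    linear_combination e - v (σ x₀) * h2

end S1invW

theorem stmt_12_general (F : Type) [Field F] (p : ℕ) [Fact p.Prime] [CharP F p]
    (a b : ℕ) (ha : 2 ≤ a) (hb : 2 ≤ b) (hn : 6 ≤ a * b) :
    (¬(p = 2 ∧ b = 2) → ∀ q : S1quot F (a * b), S1invW F (a * b) a q → q = 0) ∧
    ((p = 2 ∧ b = 2) → ∃ q : S1quot F (a * b), q ≠ 0 ∧ S1invW F (a * b) a q) := by
  refine ⟨fun hpb q hq => ?_, fun ⟨hp, hb2⟩ => ?_⟩
  · obtain ⟨v, rfl⟩ := Submodule.Quotient.mk_surjective _ q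
    have h2 : 3 ≤ b ∨ (2 : F) ≠ 0 := by
      refine or_iff_not_imp_left.mpr fun hb3 h2 => hpb ⟨?_, by omega⟩
      exact (Nat.prime_dvd_prime_iff_eq Fact.out Nat.prime_two).mp
        ((CharP.cast_eq_zero_iff F p 2).mp (by exact_mod_cast h2))
    exact mk_eq_zero_of_forall_eq
      (hq.apply_eq_of_forall_div_eq ha h2 fun _ _ => hq.apply_eq_of_div_eq ha hb hn)
  · subst hp hb2
    exact S1invW.exists_ne_zero_of_two_eq_zero ha (by exact_mod_cast CharP.cast_eq_zero F 2)

/-- For `n = ab ≥ 6` with `a, b ≥ 2`, the invariants `(S_1^*)^{G_{a,b}}` are zero, unless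
`p = 2` and `b = 2`, in which case they are nonzero. -/
theorem stmt_12 (F : Type) [Field F] [IsAlgClosed F] (p : ℕ) [Fact p.Prime] [CharP F p]
    (a b : ℕ) (ha : 2 ≤ a) (hb : 2 ≤ b) (hn : 6 ≤ a * b) :
    (¬(p = 2 ∧ b = 2) → ∀ q : S1quot F (a * b), S1invW F (a * b) a q → q = 0) ∧
    ((p = 2 ∧ b = 2) → ∃ q : S1quot F (a * b), q ≠ 0 ∧ S1invW F (a * b) a q) :=
  stmt_12_general F p a b ha hb hn
end

section
/- Let p = 2 and n = 2a with a ≥ 2, and suppose λ ∈ P^A_2(n), i.e., D^λ↓_{A_n} = E^λ_+ ⊕ E^λ_−. If E^λ_+↓_{G_{a,2}} is irreducible, where G_{a,2} = (S_a ≀ S_2) ∩ A_n, then D^λ↓_{S_a ≀ S_2} is either irreducible or has exactly two composition factors which are isomorphic to each other; consequently D^λ↓_{S_a} has at most two isomorphism classes of composition factors. -/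
/-- `σ` lies in the copy of `S_a` permuting `{0, …, a−1}` and fixing all other points. -/
def saFix (n a : ℕ) (σ : Equiv.Perm (Fin n)) : Prop :=
  ∀ x : Fin n, a ≤ (x : ℕ) → σ x = x

open Submodule

namespace Representation

variable {Γ F V : Type*} [Group Γ] [Field F] [AddCommGroup V] [Module F V]
  (ρ : Representation F Γ V)

def IsStable (P : Set Γ) (W : Submodule F V) : Prop :=
  ∀ g ∈ P, W ∈ Module.End.invtSubmodule (ρ g)

def IsIntertwining (P : Set Γ) (f : V →ₗ[F] V) : Prop :=
  ∀ g ∈ P, ∀ v, f (ρ g v) = ρ g (f v)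

structure IsSimpleSubquotient (P : Set Γ) (A B : Submodule F V) : Prop where
  isStable_left : ρ.IsStable P A
  isStable_right : ρ.IsStable P B
  lt : B < A
  eq_or_eq : ∀ W, B ≤ W → W ≤ A → ρ.IsStable P W → W = B ∨ W = A

/-- `A / B ≅ A' / B'` as `P`-modules. The quotients carry no bundled action, so equivariance is
stated on representatives. -/
def SubquotientIso (P : Set Γ) (A B A' B' : Submodule F V) : Prop :=
  ∃ e : (A ⧸ B.comap A.subtype) ≃ₗ[F] (A' ⧸ B'.comap A'.subtype),
    ∀ g ∈ P, ∀ (v w : V) (hv : v ∈ A) (hw : w ∈ A') (hv' : ρ g v ∈ A) (hw' : ρ g w ∈ A'),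
      e (Submodule.Quotient.mk ⟨v, hv⟩) = Submodule.Quotient.mk ⟨w, hw⟩ →
      e (Submodule.Quotient.mk ⟨ρ g v, hv'⟩) = Submodule.Quotient.mk ⟨ρ g w, hw'⟩

variable {ρ} {P Q : Set Γ} {f : V →ₗ[F] V} {A B A' B' E M N U W : Submodule F V}

lemma ker_rho (g : Γ) : LinearMap.ker (ρ g) = ⊥ :=
  LinearMap.ker_eq_bot_of_inverse (g := ρ g⁻¹) (LinearMap.ext (ρ.inv_self_apply g))

lemma IsIntertwining.mono (hPQ : P ⊆ Q) (hf : ρ.IsIntertwining Q f) : ρ.IsIntertwining P f :=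
  fun g hg => hf g (hPQ hg)

namespace IsStable

lemma bot : ρ.IsStable P ⊥ := fun _ _ => Module.End.invtSubmodule.bot_mem _

lemma top : ρ.IsStable P ⊤ := fun _ _ => Module.End.invtSubmodule.top_mem _

lemma mono (hPQ : P ⊆ Q) (hW : ρ.IsStable Q W) : ρ.IsStable P W :=
  fun g hg => hW g (hPQ hg)

lemma sup (hW : ρ.IsStable P W) (hM : ρ.IsStable P M) : ρ.IsStable P (W ⊔ M) :=
  fun g hg => Module.End.invtSubmodule.sup_mem (hW g hg) (hM g hg)

lemma inf (hW : ρ.IsStable P W) (hM : ρ.IsStable P M) : ρ.IsStable P (W ⊓ M) :=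
  fun g hg => Module.End.invtSubmodule.inf_mem (hW g hg) (hM g hg)

lemma iSup {ι : Sort*} {S : ι → Submodule F V} (hS : ∀ i, ρ.IsStable P (S i)) :
    ρ.IsStable P (⨆ i, S i) :=
  fun g hg => iSup_le fun i => (hS i g hg).trans (comap_mono (le_iSup S i))

lemma map (hf : ρ.IsIntertwining P f) (hW : ρ.IsStable P W) : ρ.IsStable P (W.map f) := by
  rintro g hg _ ⟨w, hw, rfl⟩
  exact ⟨ρ g w, hW g hg hw, hf g hg w⟩

lemma comap (hf : ρ.IsIntertwining P f) (hW : ρ.IsStable P W) : ρ.IsStable P (W.comap f) := by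
  intro g hg v hv
  change f (ρ g v) ∈ W
  rw [hf g hg]
  exact hW g hg hv

lemma map_rho {τ : Γ} (hτ : ∀ g ∈ P, τ⁻¹ * g * τ ∈ P) (hW : ρ.IsStable P W) :
    ρ.IsStable P (W.map (ρ τ)) := by
  rintro g hg _ ⟨w, hw, rfl⟩
  refine ⟨ρ (τ⁻¹ * g * τ) w, hW _ (hτ g hg) hw, ?_⟩
  simp only [map_mul, Module.End.mul_apply, self_inv_apply]

end IsStable

structure InducesQuotientEquiv (f : V →ₗ[F] V) (A B A' B' : Submodule F V) : Prop where
  map_le : A.map f ≤ A'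
  map_le_right : B.map f ≤ B'
  inf_comap_le : A ⊓ B'.comap f ≤ B
  le_map_sup : A' ≤ A.map f ⊔ B'

namespace InducesQuotientEquiv

lemma subquotientIso (h : InducesQuotientEquiv f A B A' B') (hf : ρ.IsIntertwining P f)
    (hB' : ρ.IsStable P B') : ρ.SubquotientIso P A B A' B' := by
  have hfA : ∀ x ∈ A, f x ∈ A' := fun x hx => h.map_le (mem_map_of_mem hx)
  let F₁ : A →ₗ[F] A' ⧸ B'.comap A'.subtype := (B'.comap A'.subtype).mkQ ∘ₗ f.restrict hfA
  have hker : LinearMap.ker F₁ = B.comap A.subtype := by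
    ext x
    simp only [F₁, LinearMap.mem_ker, LinearMap.comp_apply, mkQ_apply,
      Submodule.Quotient.mk_eq_zero, mem_comap, subtype_apply, LinearMap.coe_restrict_apply]
    exact ⟨fun hx => h.inf_comap_le ⟨x.2, hx⟩, fun hx => h.map_le_right (mem_map_of_mem hx)⟩
  let e₀ := (B.comap A.subtype).liftQ F₁ hker.ge
  have he₀ (x : V) (hx : x ∈ A) :
      e₀ (Submodule.Quotient.mk ⟨x, hx⟩) = Submodule.Quotient.mk ⟨f x, hfA x hx⟩ := rfl
  have hsurj : Function.Surjective e₀ := by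
    intro z
    obtain ⟨⟨y, hy⟩, rfl⟩ := Submodule.Quotient.mk_surjective _ z
    obtain ⟨_, ⟨x, hx, rfl⟩, b, hb, hxy⟩ := mem_sup.1 (h.le_map_sup hy)
    refine ⟨Submodule.Quotient.mk ⟨x, hx⟩, ?_⟩
    rw [he₀, Submodule.Quotient.eq, mem_comap, subtype_apply, AddSubgroupClass.coe_sub]
    simpa [← hxy] using neg_mem hb
  have hinj : Function.Injective e₀ :=
    LinearMap.ker_eq_bot.1 (ker_liftQ_eq_bot _ _ _ hker.le)
  refine ⟨LinearEquiv.ofBijective e₀ ⟨hinj, hsurj⟩, fun g hg v w hv hw hv' hw' hvw => ?_⟩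
  change e₀ _ = _ at hvw
  change e₀ _ = _
  simp only [he₀, Submodule.Quotient.eq, mem_comap, subtype_apply,
    AddSubgroupClass.coe_sub] at hvw ⊢
  rw [hf g hg, ← map_sub]
  exact hB' g hg hvw

lemma isSimpleSubquotient (h : InducesQuotientEquiv f A B A' B') (hf : ρ.IsIntertwining P f)
    (hA' : ρ.IsStable P A') (hB' : ρ.IsStable P B') (hBA' : B' ≤ A')
    (hs : ρ.IsSimpleSubquotient P A B) : ρ.IsSimpleSubquotient P A' B' := by
  refine ⟨hA', hB', lt_of_le_not_ge hBA' fun hAB' => hs.lt.not_ge ?_, fun W hBW hWA hW => ?_⟩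
  · exact le_inf le_rfl (map_le_iff_le_comap.1 (h.map_le.trans hAB')) |>.trans h.inf_comap_le
  have hB : B ≤ A ⊓ W.comap f :=
    le_inf hs.lt.le (map_le_iff_le_comap.1 (h.map_le_right.trans hBW))
  rcases hs.eq_or_eq _ hB inf_le_left (hs.isStable_left.inf (hW.comap hf)) with h₀ | h₀
  · refine Or.inl (le_antisymm (fun w hw => ?_) hBW)
    obtain ⟨_, ⟨x, hx, rfl⟩, b, hb, rfl⟩ := mem_sup.1 (h.le_map_sup (hWA hw))
    have hxW : x ∈ A ⊓ W.comap f := ⟨hx, by simpa using W.sub_mem hw (hBW hb)⟩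
    exact B'.add_mem (h.map_le_right (mem_map_of_mem (h₀ ▸ hxW))) hb
  · refine Or.inr (le_antisymm hWA (h.le_map_sup.trans (sup_le ?_ hBW)))
    exact map_le_iff_le_comap.2 (h₀ ▸ inf_le_right)

lemma isSimpleSubquotient_of_target (h : InducesQuotientEquiv f A B A' B')
    (hf : ρ.IsIntertwining P f) (hA : ρ.IsStable P A) (hB : ρ.IsStable P B) (hBA : B ≤ A)
    (hs : ρ.IsSimpleSubquotient P A' B') : ρ.IsSimpleSubquotient P A B := by
  refine ⟨hA, hB, lt_of_le_not_ge hBA fun hAB => hs.lt.not_ge ?_, fun W hBW hWA hW => ?_⟩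
  · exact h.le_map_sup.trans (sup_le ((map_mono hAB).trans h.map_le_right) le_rfl)
  have hW' : B' ≤ W.map f ⊔ B' := le_sup_right
  rcases hs.eq_or_eq _ hW' (sup_le ((map_mono hWA).trans h.map_le) hs.lt.le)
      ((hW.map hf).sup hs.isStable_right) with h₀ | h₀
  · refine Or.inl (le_antisymm ?_ hBW)
    exact (le_inf hWA (map_le_iff_le_comap.1 (h₀ ▸ le_sup_left))).trans h.inf_comap_le
  · refine Or.inr (le_antisymm hWA fun x hx => ?_)
    obtain ⟨_, ⟨w, hw, rfl⟩, b, hb, hwb⟩ := mem_sup.1 (h₀ ▸ h.map_le (mem_map_of_mem hx))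
    have hxw : x - w ∈ A ⊓ B'.comap f := ⟨A.sub_mem hx (hWA hw), by simpa [← hwb] using hb⟩
    simpa using W.add_mem (hBW (h.inf_comap_le hxw)) hw

end InducesQuotientEquiv

namespace SubquotientIso

lemma refl (hB : ρ.IsStable P B) : ρ.SubquotientIso P A B A B :=
  InducesQuotientEquiv.subquotientIso (f := LinearMap.id) ⟨by simp, by simp, by simp, by simp⟩
    (fun _ _ _ => rfl) hB

lemma symm (h : ρ.SubquotientIso P A B A' B') : ρ.SubquotientIso P A' B' A B := by
  obtain ⟨e, he⟩ := h
  refine ⟨e.symm, fun g hg v w hv hw hv' hw' hvw => ?_⟩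
  rw [LinearEquiv.symm_apply_eq] at hvw ⊢
  exact (he g hg w v hw hv hw' hv' hvw.symm).symm

lemma trans (hA' : ρ.IsStable P A') (h : ρ.SubquotientIso P A B A' B')
    (h' : ρ.SubquotientIso P A' B' M N) : ρ.SubquotientIso P A B M N := by
  obtain ⟨e, he⟩ := h
  obtain ⟨e', he'⟩ := h'
  refine ⟨e.trans e', fun g hg v w hv hw hv' hw' hvw => ?_⟩
  obtain ⟨⟨u, hu⟩, hvu⟩ := Submodule.Quotient.mk_surjective _ (e (Submodule.Quotient.mk ⟨v, hv⟩))
  have hgu := hA' g hg hu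
  rw [LinearEquiv.trans_apply] at hvw ⊢
  rw [← hvu] at hvw
  rw [he g hg v u hv hu hv' hgu hvu.symm, he' g hg u w hu hw hgu hw' hvw]

end SubquotientIso

lemma inducesQuotientEquiv_inf (hBA : B ≤ A) (hA : A ≤ B ⊔ N) :
    InducesQuotientEquiv LinearMap.id (A ⊓ N) (B ⊓ N) A B where
  map_le := by simp
  map_le_right := by simp
  inf_comap_le := by
    rw [comap_id]
    exact le_inf inf_le_right (inf_le_left.trans inf_le_right)
  le_map_sup := calc
    A ≤ (B ⊔ N) ⊓ A := le_inf hA le_rfl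
    _ = B ⊔ N ⊓ A := sup_inf_assoc_of_le N hBA
    _ = (A ⊓ N).map LinearMap.id ⊔ B := by rw [map_id, inf_comm, sup_comm]

lemma inducesQuotientEquiv_sup (hBA : B ≤ A) (hA : A ⊓ N ≤ B) :
    InducesQuotientEquiv LinearMap.id A B (A ⊔ N) (B ⊔ N) where
  map_le := by simp
  map_le_right := by simp
  inf_comap_le := by
    rw [comap_id, inf_comm, sup_inf_assoc_of_le _ hBA, inf_comm]
    exact sup_le le_rfl hA
  le_map_sup := by rw [map_id]; exact sup_le le_sup_left (le_sup_right.trans le_sup_right)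

lemma inducesQuotientEquiv_map (hker : LinearMap.ker f ≤ B) :
    InducesQuotientEquiv f A B (A.map f) (B.map f) where
  map_le := le_rfl
  map_le_right := le_rfl
  inf_comap_le := by rw [comap_map_eq, sup_eq_left.2 hker]; exact inf_le_right
  le_map_sup := le_sup_left

namespace IsSimpleSubquotient

lemma le_sup_or_inf_le (hs : ρ.IsSimpleSubquotient P A B) (hN : ρ.IsStable P N) :
    A ≤ B ⊔ N ∨ A ⊓ N ≤ B := by
  rcases hs.eq_or_eq (A ⊓ (B ⊔ N)) (le_inf hs.lt.le le_sup_left) inf_le_left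
    (hs.isStable_left.inf (hs.isStable_right.sup hN)) with h | h
  · exact Or.inr (h ▸ inf_le_inf_left A le_sup_right)
  · exact Or.inl (h ▸ inf_le_right)

lemma inf (hs : ρ.IsSimpleSubquotient P A B) (hN : ρ.IsStable P N) (hA : A ≤ B ⊔ N) :
    ρ.IsSimpleSubquotient P (A ⊓ N) (B ⊓ N) ∧ ρ.SubquotientIso P A B (A ⊓ N) (B ⊓ N) := by
  have h := inducesQuotientEquiv_inf hs.lt.le hA
  have hid : ρ.IsIntertwining P LinearMap.id := fun _ _ _ => rfl
  exact ⟨h.isSimpleSubquotient_of_target hid (hs.isStable_left.inf hN)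
    (hs.isStable_right.inf hN) (inf_le_inf_right N hs.lt.le) hs,
    (h.subquotientIso hid hs.isStable_right).symm⟩

lemma sup (hs : ρ.IsSimpleSubquotient P A B) (hN : ρ.IsStable P N) (hA : A ⊓ N ≤ B) :
    ρ.IsSimpleSubquotient P (A ⊔ N) (B ⊔ N) ∧ ρ.SubquotientIso P A B (A ⊔ N) (B ⊔ N) := by
  have h := inducesQuotientEquiv_sup hs.lt.le hA
  have hid : ρ.IsIntertwining P LinearMap.id := fun _ _ _ => rfl
  have hBN := hs.isStable_right.sup hN
  exact ⟨h.isSimpleSubquotient hid (hs.isStable_left.sup hN) hBN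
    (sup_le_sup_right hs.lt.le N) hs, h.subquotientIso hid hBN⟩

lemma map (hs : ρ.IsSimpleSubquotient P A B) (hf : ρ.IsIntertwining P f)
    (hker : LinearMap.ker f ≤ B) :
    ρ.IsSimpleSubquotient P (A.map f) (B.map f) ∧ ρ.SubquotientIso P A B (A.map f) (B.map f) := by
  have h := inducesQuotientEquiv_map (A := A) hker
  have hB := hs.isStable_right.map hf
  exact ⟨h.isSimpleSubquotient hf (hs.isStable_left.map hf) hB (map_mono hs.lt.le) hs,
    h.subquotientIso hf hB⟩

lemma eq_of_le (hs : ρ.IsSimpleSubquotient P A B) (hM : ρ.IsSimpleSubquotient P M ⊥)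
    (hAM : A ≤ M) : A = M ∧ B = ⊥ := by
  have hA : A = M := (hM.eq_or_eq A bot_le hAM hs.isStable_left).resolve_left
    (bot_le.trans_lt hs.lt).ne'
  refine ⟨hA, (hM.eq_or_eq B bot_le (hs.lt.le.trans hAM) hs.isStable_right).resolve_right ?_⟩
  exact fun hB => hs.lt.ne (hB.trans hA.symm)

lemma exists_iso_of_le_sup (hs : ρ.IsSimpleSubquotient P A B) (hM : ρ.IsStable P M)
    (hN : ρ.IsStable P N) (hA : A ≤ M ⊔ N) :
    ∃ A' B', ρ.IsSimpleSubquotient P A' B' ∧ ρ.SubquotientIso P A B A' B' ∧ (A' ≤ M ∨ A' ≤ N) := by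
  rcases hs.le_sup_or_inf_le hM with hAM | hAM
  · obtain ⟨hs', hi⟩ := hs.inf hM hAM
    exact ⟨_, _, hs', hi, Or.inl inf_le_right⟩
  obtain ⟨hs', hi⟩ := hs.sup hM hAM
  have hle : A ⊔ M ≤ (B ⊔ M) ⊔ N := sup_le (hA.trans (sup_le_sup_right le_sup_right N))
    (le_sup_right.trans le_sup_left)
  obtain ⟨hs'', hi'⟩ := hs'.inf hN hle
  exact ⟨_, _, hs'', hi.trans hs'.isStable_left hi', Or.inr inf_le_right⟩

lemma exists_iso_of_le_iSup {ι : Type*} [Finite ι] {S : ι → Submodule F V}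
    (hS : ∀ i, ρ.IsSimpleSubquotient P (S i) ⊥) (hs : ρ.IsSimpleSubquotient P A B)
    (hA : A ≤ ⨆ i, S i) : ∃ i, ρ.SubquotientIso P A B (S i) ⊥ := by
  classical
  have := Fintype.ofFinite ι
  suffices ∀ (s : Finset ι) (A B : Submodule F V), ρ.IsSimpleSubquotient P A B →
      A ≤ ⨆ i ∈ s, S i → ∃ i, ρ.SubquotientIso P A B (S i) ⊥ from
    this Finset.univ A B hs (by simpa using hA)
  intro s
  induction s using Finset.induction_on with
  | empty =>
    intro A B hs hA
    have hA : A ≤ ⊥ := by simpa using hA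
    exact absurd (hs.lt.trans_le hA) not_lt_bot
  | insert j s _ ih =>
    intro A B hs hA
    rw [Finset.iSup_insert] at hA
    have hN : ρ.IsStable P (⨆ i ∈ s, S i) := IsStable.iSup fun i => IsStable.iSup fun _ =>
      (hS i).isStable_left
    obtain ⟨A', B', hs', hi, hA' | hA'⟩ := hs.exists_iso_of_le_sup (hS j).isStable_left hN hA
    · obtain ⟨rfl, rfl⟩ := hs'.eq_of_le (hS j) hA'
      exact ⟨j, hi⟩
    · obtain ⟨i, hi'⟩ := ih A' B' hs' hA'
      exact ⟨i, hi.trans hs'.isStable_left hi'⟩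

end IsSimpleSubquotient

lemma exists_isSimpleSubquotient_le [FiniteDimensional F V] (hM : ρ.IsStable P M)
    (hM0 : M ≠ ⊥) : ∃ Z ≤ M, ρ.IsSimpleSubquotient P Z ⊥ := by
  obtain ⟨Z, ⟨hZM, hZ, hZ0⟩, hmin⟩ := wellFounded_lt.has_min
    {Z : Submodule F V | Z ≤ M ∧ ρ.IsStable P Z ∧ Z ≠ ⊥} ⟨M, le_rfl, hM, hM0⟩
  refine ⟨Z, hZM, hZ, IsStable.bot, bot_lt_iff_ne_bot.2 hZ0, fun W _ hWZ hW => ?_⟩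
  by_contra! hW'
  exact hmin W ⟨hWZ.trans hZM, hW, hW'.1⟩ (lt_of_le_of_ne hWZ hW'.2)

lemma finiteDimensional_of_irreducible [Finite Γ]
    (hirr : ∀ W : Submodule F V, ρ.IsStable Set.univ W → W = ⊥ ∨ W = ⊤) {v : V} (hv : v ≠ 0) :
    FiniteDimensional F V := by
  have hspan : span F (Set.range fun g => ρ g v) = ⊤ := by
    refine (hirr _ fun g _ => ?_).resolve_left fun h => hv ?_
    · rw [Module.End.mem_invtSubmodule, span_le]
      rintro _ ⟨k, rfl⟩
      exact subset_span ⟨g * k, by simp⟩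
    · have hv' : v ∈ Set.range fun g => ρ g v := ⟨1, by simp⟩
      rw [← mem_bot F, ← h]
      exact subset_span hv'
  exact Module.finite_def.2 (hspan ▸ fg_span (Set.finite_range _))

lemma isIntertwining_projection (hE : ρ.IsStable P E) (hU : ρ.IsStable P U) (hEU : IsCompl E U) :
    ρ.IsIntertwining P (E.projection U hEU) := by
  intro g hg v
  have hrange : LinearMap.range (E.projection U hEU) ∈ Module.End.invtSubmodule (ρ g) := by
    rw [range_projection]; exact hE g hg
  have hker : LinearMap.ker (E.projection U hEU) ∈ Module.End.invtSubmodule (ρ g) := by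
    rw [ker_projection]; exact hU g hg
  exact LinearMap.congr_fun ((LinearMap.IsIdempotentElem.commute_iff
    (isIdempotentElem_projection _)).2 ⟨hrange, hker⟩) v

def IsSimpleOrTwoIsoFactors (Q : Set Γ) : Prop :=
  (∀ U, ρ.IsStable Q U → U = ⊥ ∨ U = ⊤) ∨
    ∃ U, ρ.IsSimpleSubquotient Q U ⊥ ∧ ρ.IsSimpleSubquotient Q ⊤ U ∧
      ∃ f, ρ.IsIntertwining Q f ∧ LinearMap.ker f = U ∧ LinearMap.range f = U

/-- `Q = P ∪ τP` for an involution `τ ∈ Q` normalising `P`; for subgroups, `[Q : P] ≤ 2`. -/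
structure IsIndexTwo (P Q : Set Γ) (τ : Γ) : Prop where
  subset : P ⊆ Q
  mem : τ ∈ Q
  mul_self : τ * τ = 1
  conj_mem : ∀ g ∈ P, τ * g * τ ∈ P
  mem_or_mul_mem : ∀ g ∈ Q, g ∈ P ∨ τ * g ∈ P

/-- The relative trace `Tr_P^Q p` for the transversal `{1, τ}` of `P` in `Q`. -/
noncomputable def relTrace (τ : Γ) (p : V →ₗ[F] V) : V →ₗ[F] V :=
  p + ρ τ ∘ₗ p ∘ₗ ρ τ⁻¹

namespace IsIndexTwo

variable {τ : Γ} (h : IsIndexTwo P Q τ)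
include h

lemma inv_eq : τ⁻¹ = τ := inv_eq_of_mul_eq_one_left h.mul_self

lemma rho_rho (v : V) : ρ τ (ρ τ v) = v := by
  rw [← Module.End.mul_apply, ← map_mul, h.mul_self, map_one, Module.End.one_apply]

lemma map_map (W : Submodule F V) : (W.map (ρ τ)).map (ρ τ) = W := by
  rw [← map_comp, show ρ τ ∘ₗ ρ τ = LinearMap.id from LinearMap.ext h.rho_rho, map_id]

lemma eq_mul_mul (g : Γ) : g = τ * (τ * g) := by rw [← mul_assoc, h.mul_self, one_mul]

lemma conj_mem_inv : ∀ g ∈ P, τ⁻¹ * g * τ ∈ P := by simpa only [h.inv_eq] using h.conj_mem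

lemma isStable (hP : ρ.IsStable P W) (hτ : W.map (ρ τ) ≤ W) : ρ.IsStable Q W := by
  intro g hg
  rcases h.mem_or_mul_mem g hg with hg' | hg'
  · exact hP g hg'
  · intro v hv
    change ρ g v ∈ W
    rw [h.eq_mul_mul g, map_mul, Module.End.mul_apply]
    exact hτ (mem_map_of_mem (hP _ hg' hv))

lemma isIntertwining (hP : ρ.IsIntertwining P f) (hτ : ∀ v, f (ρ τ v) = ρ τ (f v)) :
    ρ.IsIntertwining Q f := by
  intro g hg v
  rcases h.mem_or_mul_mem g hg with hg' | hg'
  · exact hP g hg' v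
  · rw [h.eq_mul_mul g, map_mul, Module.End.mul_apply, hτ, hP _ hg']
    rfl

lemma isStable_sup_map (hE : ρ.IsStable P E) : ρ.IsStable Q (E ⊔ E.map (ρ τ)) := by
  refine h.isStable (hE.sup (hE.map_rho h.conj_mem_inv)) ?_
  rw [Submodule.map_sup, h.map_map, sup_comm]

lemma isSimpleSubquotient_map (hE : ρ.IsSimpleSubquotient P E ⊥) :
    ρ.IsSimpleSubquotient P (E.map (ρ τ)) ⊥ := by
  refine ⟨hE.isStable_left.map_rho h.conj_mem_inv, IsStable.bot, bot_lt_iff_ne_bot.2 fun h0 => ?_,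
    fun W _ hW hWs => ?_⟩
  · exact hE.lt.ne' (by rw [← h.map_map E, h0, Submodule.map_bot])
  rcases hE.eq_or_eq (W.map (ρ τ)) bot_le (h.map_map E ▸ map_mono hW)
      (hWs.map_rho h.conj_mem_inv) with h0 | h0
  · exact Or.inl (by rw [← h.map_map W, h0, Submodule.map_bot])
  · exact Or.inr (by rw [← h.map_map W, h0])

lemma rho_rho_conj (g : Γ) (v : V) : ρ τ (ρ (τ * g * τ) v) = ρ g (ρ τ v) := by
  simp only [map_mul, Module.End.mul_apply, h.rho_rho]

lemma isIntertwining_relTrace {p : V →ₗ[F] V} (hp : ρ.IsIntertwining P p) :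
    ρ.IsIntertwining Q (ρ.relTrace τ p) := by
  rw [relTrace, h.inv_eq]
  refine h.isIntertwining (fun g hg v => ?_) fun v => ?_
  · have hτg : ρ τ (ρ g v) = ρ (τ * g * τ) (ρ τ v) := by
      simp only [map_mul, Module.End.mul_apply, h.rho_rho]
    simp only [LinearMap.add_apply, LinearMap.comp_apply, map_add, hτg, hp g hg,
      hp _ (h.conj_mem g hg), h.rho_rho_conj]
  · simp only [LinearMap.add_apply, LinearMap.comp_apply, map_add, h.rho_rho, add_comm]

lemma eq_bot_or_eq_top_or_isCompl (hE : ρ.IsSimpleSubquotient P E ⊥)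
    (hτE : E ⊔ E.map (ρ τ) = ⊤) (hU : ρ.IsStable Q U) : U = ⊥ ∨ U = ⊤ ∨ IsCompl U E := by
  have hUP := hU.mono h.subset
  have hτU : U.map (ρ τ) ≤ U := map_le_iff_le_comap.2 (hU τ h.mem)
  have hτE' := hE.isStable_left.map_rho h.conj_mem_inv
  rcases hE.eq_or_eq (U ⊓ E) bot_le inf_le_right (hUP.inf hE.isStable_left) with hUE | hUE
  · rcases hE.eq_or_eq ((U ⊔ E.map (ρ τ)) ⊓ E) bot_le inf_le_right
        ((hUP.sup hτE').inf hE.isStable_left) with hX | hX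
    · refine Or.inl (eq_bot_iff.2 (hUE ▸ le_inf le_rfl ?_))
      have hUτE : U ≤ E.map (ρ τ) := calc
        U ≤ (U ⊔ E.map (ρ τ)) ⊓ (E ⊔ E.map (ρ τ)) := by rw [hτE, inf_top_eq]; exact le_sup_left
        _ = (U ⊔ E.map (ρ τ)) ⊓ E ⊔ E.map (ρ τ) := (inf_sup_assoc_of_le _ le_sup_right).symm
        _ = E.map (ρ τ) := by rw [hX, bot_sup_eq]
      calc U = (U.map (ρ τ)).map (ρ τ) := (h.map_map U).symm
        _ ≤ U.map (ρ τ) := map_mono hτU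
        _ ≤ E := h.map_map E ▸ map_mono hUτE
    · refine Or.inr (Or.inr ⟨disjoint_iff.2 hUE, codisjoint_iff.2 (top_unique ?_)⟩)
      rw [← hτE]
      refine sup_le le_sup_right ?_
      calc E.map (ρ τ) ≤ (U ⊔ E.map (ρ τ)).map (ρ τ) := map_mono (hX.symm.le.trans inf_le_left)
        _ = U.map (ρ τ) ⊔ E := by rw [Submodule.map_sup, h.map_map]
        _ ≤ U ⊔ E := sup_le_sup_right hτU E
  · have hEU : E ≤ U := hUE ▸ inf_le_left
    exact Or.inr (Or.inl (top_unique (hτE ▸ sup_le hEU ((map_mono hEU).trans hτU))))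

lemma inf_map_eq_bot (hE : ρ.IsSimpleSubquotient P E ⊥) (hτE : E ⊔ E.map (ρ τ) = ⊤)
    (hEtop : E ≠ ⊤) : E ⊓ E.map (ρ τ) = ⊥ := by
  refine (hE.eq_or_eq _ bot_le inf_le_left (hE.isStable_left.inf
    (hE.isStable_left.map_rho h.conj_mem_inv))).resolve_right fun hEE => hEtop ?_
  have hE' : E.map (ρ τ) ≤ E := (map_mono (hEE.symm.le.trans inf_le_right)).trans (h.map_map E).le
  rw [← hτE, sup_eq_left.2 hE']

lemma isSimpleSubquotient_of_isCompl (hE : ρ.IsSimpleSubquotient P E ⊥)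
    (hτE : E ⊔ E.map (ρ τ) = ⊤) (hU : ρ.IsStable Q U) (hU0 : U ≠ ⊥) (hUtop : U ≠ ⊤)
    (hUE : IsCompl U E) : ρ.IsSimpleSubquotient Q U ⊥ ∧ ρ.IsSimpleSubquotient Q ⊤ U := by
  have hcompl {W : Submodule F V} (hW : ρ.IsStable Q W) (hW0 : W ≠ ⊥) (hWtop : W ≠ ⊤) :
      IsCompl W E :=
    ((h.eq_bot_or_eq_top_or_isCompl hE hτE hW).resolve_left hW0).resolve_left hWtop
  refine ⟨⟨hU, IsStable.bot, bot_lt_iff_ne_bot.2 hU0, fun W _ hWU hW => ?_⟩,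
    ⟨IsStable.top, hU, lt_top_iff_ne_top.2 hUtop, fun W hUW _ hW => ?_⟩⟩
  · refine or_iff_not_imp_left.2 fun hW0 => eq_of_le_of_inf_le_of_sup_le hWU
      (by rw [hUE.inf_eq_bot]; exact bot_le) ?_
    rw [(hcompl hW hW0 fun hWtop => hUtop (top_unique (hWtop ▸ hWU))).sup_eq_top]
    exact le_top
  · refine or_iff_not_imp_right.2 fun hWtop => (eq_of_le_of_inf_le_of_sup_le hUW ?_
      (by rw [hUE.sup_eq_top]; exact le_top)).symm
    rw [(hcompl hW (fun hW0 => hU0 (eq_bot_iff.2 (hW0 ▸ hUW))) hWtop).inf_eq_bot]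
    exact bot_le

lemma relTrace_projection_apply_of_mem_right (hτU : U.map (ρ τ) ≤ U) (hUE : IsCompl U E)
    {u : V} (hu : u ∈ U) : ρ.relTrace τ (E.projection U hUE.symm) u = 0 := by
  simp only [relTrace, h.inv_eq, LinearMap.add_apply, LinearMap.comp_apply,
    projection_apply_of_mem_right _ hu, projection_apply_of_mem_right _ (hτU (mem_map_of_mem hu)),
    map_zero, add_zero]

lemma relTrace_projection_apply_of_mem_left [CharP F 2] (hτU : U.map (ρ τ) ≤ U)
    (hUE : IsCompl U E) {x : V} (hx : x ∈ E) :
    ρ.relTrace τ (E.projection U hUE.symm) x ∈ U ∧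
      (ρ.relTrace τ (E.projection U hUE.symm) x = 0 → x ∈ E.map (ρ τ)) := by
  set p := E.projection U hUE.symm
  set z := ρ τ (p (ρ τ x))
  have hfx : ρ.relTrace τ p x = x + z := by
    simp only [relTrace, h.inv_eq, LinearMap.add_apply, LinearMap.comp_apply, p,
      projection_apply_of_mem_left _ hx, z]
  have hxz : x - z ∈ U := by
    have hy := projection_apply_mem hUE (ρ τ x)
    rw [projection_eq_self_sub_projection hUE.symm] at hy
    simpa only [map_sub, h.rho_rho] using hτU (mem_map_of_mem hy)
  have hzz : z + z = 0 := by rw [← two_smul F, CharTwo.two_eq_zero, zero_smul]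
  refine ⟨?_, fun h0 => ?_⟩
  · rw [hfx, show x + z = x - z + (z + z) by abel, hzz, add_zero]
    exact hxz
  · rw [hfx, add_eq_zero_iff_eq_neg, neg_eq_of_add_eq_zero_left hzz] at h0
    exact h0 ▸ mem_map_of_mem (projection_apply_mem _ _)

theorem exists_ker_eq_range [CharP F 2] (hE : ρ.IsStable P E) (hE0 : E ≠ ⊥)
    (hEτE : E ⊓ E.map (ρ τ) = ⊥) (hUs : ρ.IsSimpleSubquotient Q U ⊥) (hUE : IsCompl U E) :
    ∃ f, ρ.IsIntertwining Q f ∧ LinearMap.ker f = U ∧ LinearMap.range f = U := by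
  have hτU : U.map (ρ τ) ≤ U := map_le_iff_le_comap.2 (hUs.isStable_left τ h.mem)
  set f := ρ.relTrace τ (E.projection U hUE.symm)
  have hf : ρ.IsIntertwining Q f := h.isIntertwining_relTrace
    (isIntertwining_projection hE (hUs.isStable_left.mono h.subset) hUE.symm)
  have hfE {x : V} (hx : x ∈ E) := h.relTrace_projection_apply_of_mem_left hτU hUE hx
  have hfE0 {x : V} (hx : x ∈ E) (hx0 : f x = 0) : x = 0 := by
    have hmem : x ∈ E ⊓ E.map (ρ τ) := ⟨hx, (hfE hx).2 hx0⟩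
    rwa [hEτE, mem_bot] at hmem
  have hdecomp (v : V) : ∃ u ∈ U, ∃ x ∈ E, u + x = v := mem_sup.1 (hUE.sup_eq_top ▸ mem_top)
  have happly {u x : V} (hu : u ∈ U) : f (u + x) = f x := by
    rw [map_add, h.relTrace_projection_apply_of_mem_right hτU hUE hu, zero_add]
  have hrange : LinearMap.range f ≤ U := by
    rintro _ ⟨v, rfl⟩
    obtain ⟨u, hu, x, hx, rfl⟩ := hdecomp v
    rw [happly hu]
    exact (hfE hx).1
  refine ⟨f, hf, le_antisymm (fun v hv => ?_) fun u hu => ?_, ?_⟩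
  · obtain ⟨u, hu, x, hx, rfl⟩ := hdecomp v
    rw [LinearMap.mem_ker, happly hu] at hv
    simpa [hfE0 hx hv] using hu
  · exact h.relTrace_projection_apply_of_mem_right hτU hUE hu
  · have hstable : ρ.IsStable Q (LinearMap.range f) := by
      rw [LinearMap.range_eq_map]; exact IsStable.top.map hf
    refine (hUs.eq_or_eq _ bot_le hrange hstable).resolve_left fun h0 => ?_
    obtain ⟨x, hx, hx0⟩ := (Submodule.ne_bot_iff E).1 hE0
    exact hx0 (hfE0 hx (by simpa [h0] using LinearMap.mem_range_self f x))

theorem isSimpleOrTwoIsoFactors [CharP F 2] (hE : ρ.IsSimpleSubquotient P E ⊥)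
    (hτE : E ⊔ E.map (ρ τ) = ⊤) : ρ.IsSimpleOrTwoIsoFactors Q := by
  refine or_iff_not_imp_left.2 fun hred => ?_
  push Not at hred
  obtain ⟨U, hU, hU0, hUtop⟩ := hred
  have hUE := ((h.eq_bot_or_eq_top_or_isCompl hE hτE hU).resolve_left hU0).resolve_left hUtop
  have hEtop : E ≠ ⊤ := fun hE' => hU0 (by rw [← inf_top_eq U, ← hE', hUE.inf_eq_bot])
  obtain ⟨hUs, hVU⟩ := h.isSimpleSubquotient_of_isCompl hE hτE hU hU0 hUtop hUE
  exact ⟨U, hUs, hVU, h.exists_ker_eq_range hE.isStable_left (bot_lt_iff_ne_bot.1 hE.lt)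
    (h.inf_map_eq_bot hE hτE hEtop) hUs hUE⟩

end IsIndexTwo

lemma exists_quotientEquiv_of_ker_eq_range (hf : ρ.IsIntertwining P f)
    (hker : LinearMap.ker f = U) (hrange : LinearMap.range f = U) :
    ∃ e : (V ⧸ U) ≃ₗ[F] U, ∀ g ∈ P, ∀ v : V,
      (e (Submodule.Quotient.mk (ρ g v)) : V) = ρ g (e (Submodule.Quotient.mk v)) := by
  subst hker
  refine ⟨f.quotKerEquivRange.trans (LinearEquiv.ofEq _ _ hrange), fun g hg v => ?_⟩
  simp [hf g hg v]

lemma IsSimpleSubquotient.exists_iso_le_of_range_le (hs : ρ.IsSimpleSubquotient P A B)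
    (hU : ρ.IsStable P U) (hf : ρ.IsIntertwining P f) (hker : LinearMap.ker f ≤ U)
    (hrange : LinearMap.range f ≤ U) :
    ∃ A' B', ρ.IsSimpleSubquotient P A' B' ∧ ρ.SubquotientIso P A B A' B' ∧ A' ≤ U := by
  rcases hs.le_sup_or_inf_le hU with hAU | hAU
  · obtain ⟨hs', hi⟩ := hs.inf hU hAU
    exact ⟨_, _, hs', hi, inf_le_right⟩
  · obtain ⟨hs', hi⟩ := hs.sup hU hAU
    obtain ⟨hs'', hi'⟩ := hs'.map hf (hker.trans le_sup_right)
    exact ⟨_, _, hs'', hi.trans hs'.isStable_left hi', LinearMap.map_le_range.trans hrange⟩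

lemma exists_ne_subquotientIso {Z₁ Z₂ : Submodule F V} (hZ₁ : ρ.IsStable P Z₁)
    (hZ₂ : ρ.IsStable P Z₂) (htypes : ∀ A B, ρ.IsSimpleSubquotient P A B →
      ρ.SubquotientIso P A B Z₁ ⊥ ∨ ρ.SubquotientIso P A B Z₂ ⊥)
    (A B : Fin 3 → Submodule F V) (hs : ∀ i, ρ.IsSimpleSubquotient P (A i) (B i)) :
    ∃ i j, i ≠ j ∧ ρ.SubquotientIso P (A i) (B i) (A j) (B j) := by
  classical
  obtain ⟨i, j, hij, hc⟩ := Fintype.exists_ne_map_eq_of_card_lt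
    (fun i => decide (ρ.SubquotientIso P (A i) (B i) Z₁ ⊥)) (by simp)
  refine ⟨i, j, hij, ?_⟩
  by_cases hi : ρ.SubquotientIso P (A i) (B i) Z₁ ⊥
  · have hj : ρ.SubquotientIso P (A j) (B j) Z₁ ⊥ := by simpa [hi] using hc
    exact hi.trans hZ₁ hj.symm
  · have hj : ¬ ρ.SubquotientIso P (A j) (B j) Z₁ ⊥ := by simpa [hi] using hc
    exact ((htypes _ _ (hs i)).resolve_left hi).trans hZ₂
      ((htypes _ _ (hs j)).resolve_left hj).symm

open Pointwise

variable {H K : Subgroup Γ}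

lemma IsStable.mul (hH : ρ.IsStable H W) (hK : ρ.IsStable K W) :
    ρ.IsStable ((H : Set Γ) * (K : Set Γ)) W := by
  rintro _ ⟨h, hh, k, hk, rfl⟩ v hv
  change ρ (h * k) v ∈ W
  rw [map_mul, Module.End.mul_apply]
  exact hH h hh (hK k hk hv)

lemma map_rho_map_rho (g k : Γ) (W : Submodule F V) :
    (W.map (ρ k)).map (ρ g) = W.map (ρ (g * k)) := by
  rw [← map_comp, map_mul]
  rfl

/-- `Y` is the sum of the `K`-translates of a simple `H`-submodule `Z`, each isomorphic to `Z`
because `K` commutes with `H`. -/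
theorem exists_forall_subquotientIso_of_commute [Finite K] [FiniteDimensional F V]
    (hHK : ∀ h ∈ H, ∀ k ∈ K, Commute h k) {Y : Submodule F V}
    (hY : ρ.IsSimpleSubquotient ((H : Set Γ) * (K : Set Γ)) Y ⊥) :
    ∃ Z, ρ.IsStable H Z ∧
      ∀ A B, ρ.IsSimpleSubquotient H A B → A ≤ Y → ρ.SubquotientIso H A B Z ⊥ := by
  have hHHK : (H : Set Γ) ⊆ H * K := Set.subset_mul_left _ K.one_mem
  have hKHK : (K : Set Γ) ⊆ H * K := Set.subset_mul_right _ H.one_mem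
  obtain ⟨Z, hZY, hZ⟩ := exists_isSimpleSubquotient_le (hY.isStable_left.mono hHHK)
    (bot_lt_iff_ne_bot.1 hY.lt)
  have hk (k : K) : ρ.IsIntertwining H (ρ k) := fun h hh v => by
    rw [← Module.End.mul_apply, ← map_mul, ← (hHK h hh k k.2).eq, map_mul]
    rfl
  have hS (k : K) := Submodule.map_bot (ρ k) ▸ hZ.map (hk k) (by rw [ker_rho])
  have hsum : (⨆ k : K, Z.map (ρ k)) = Y := by
    refine (hY.eq_or_eq _ bot_le (iSup_le fun k => ?_) ?_).resolve_left fun h0 => hZ.lt.ne' ?_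
    · exact map_le_iff_le_comap.2 (hZY.trans (hY.isStable_left k (hKHK k.2)))
    · refine IsStable.mul (IsStable.iSup fun k => (hS k).1.isStable_left) fun k' hk' => ?_
      rw [Module.End.mem_invtSubmodule_iff_map_le, Submodule.map_iSup]
      exact iSup_le fun k => (map_rho_map_rho _ _ Z).le.trans
        (le_iSup (fun k : K => Z.map (ρ k)) ⟨k' * k, K.mul_mem hk' k.2⟩)
    · refine eq_bot_iff.2 (le_trans ?_ (h0.le : (⨆ k : K, Z.map (ρ k)) ≤ ⊥))
      simpa [Module.End.one_eq_id] using le_iSup (fun k : K => Z.map (ρ k)) 1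
  refine ⟨Z, hZ.isStable_left, fun A B hs hA => ?_⟩
  obtain ⟨k, hk⟩ := hs.exists_iso_of_le_iSup (fun k => (hS k).1) (hsum ▸ hA)
  exact hk.trans (hS k).1.isStable_left (hS k).2.symm

theorem exists_forall_subquotientIso_or_of_commute [Finite K] [FiniteDimensional F V]
    {τ : Γ} {X : Submodule F V} (hHK : ∀ h ∈ H, ∀ k ∈ K, Commute h k)
    (hQ : IsIndexTwo ((H : Set Γ) * (K : Set Γ)) Q τ) (hX : ρ.IsSimpleSubquotient Q X ⊥) :
    ∃ Z₁ Z₂, ρ.IsStable H Z₁ ∧ ρ.IsStable H Z₂ ∧ ∀ A B, ρ.IsSimpleSubquotient H A B → A ≤ X →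
      ρ.SubquotientIso H A B Z₁ ⊥ ∨ ρ.SubquotientIso H A B Z₂ ⊥ := by
  have hHHK : (H : Set Γ) ⊆ H * K := Set.subset_mul_left _ K.one_mem
  obtain ⟨Y, hYX, hY⟩ := exists_isSimpleSubquotient_le (hX.isStable_left.mono hQ.subset)
    (bot_lt_iff_ne_bot.1 hX.lt)
  have hY' := hQ.isSimpleSubquotient_map hY
  have hXY : Y ⊔ Y.map (ρ τ) = X := by
    have hτY : Y.map (ρ τ) ≤ X := map_le_iff_le_comap.2 (hYX.trans (hX.isStable_left τ hQ.mem))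
    exact (hX.eq_or_eq _ bot_le (sup_le hYX hτY) (hQ.isStable_sup_map hY.isStable_left)).resolve_left
      fun h0 => hY.lt.ne' (eq_bot_iff.2 (h0 ▸ le_sup_left))
  obtain ⟨Z₁, hZ₁, h₁⟩ := exists_forall_subquotientIso_of_commute hHK hY
  obtain ⟨Z₂, hZ₂, h₂⟩ := exists_forall_subquotientIso_of_commute hHK hY'
  refine ⟨Z₁, Z₂, hZ₁, hZ₂, fun A B hs hA => ?_⟩
  obtain ⟨A', B', hs', hi, hA' | hA'⟩ := hs.exists_iso_of_le_sup (hY.isStable_left.mono hHHK)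
    (hY'.isStable_left.mono hHHK) (hXY ▸ hA)
  · exact Or.inl (hi.trans hs'.isStable_left (h₁ A' B' hs' hA'))
  · exact Or.inr (hi.trans hs'.isStable_left (h₂ A' B' hs' hA'))

theorem IsSimpleOrTwoIsoFactors.exists_forall_subquotientIso_or [Finite K] [FiniteDimensional F V]
    {τ : Γ} (hV : (⊥ : Submodule F V) < ⊤) (hHK : ∀ h ∈ H, ∀ k ∈ K, Commute h k)
    (hQ : IsIndexTwo ((H : Set Γ) * (K : Set Γ)) Q τ) (hcl : ρ.IsSimpleOrTwoIsoFactors Q) :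
    ∃ Z₁ Z₂, ρ.IsStable H Z₁ ∧ ρ.IsStable H Z₂ ∧ ∀ A B, ρ.IsSimpleSubquotient H A B →
      ρ.SubquotientIso H A B Z₁ ⊥ ∨ ρ.SubquotientIso H A B Z₂ ⊥ := by
  have hHQ : (H : Set Γ) ⊆ Q := (Set.subset_mul_left _ K.one_mem).trans hQ.subset
  obtain ⟨X, hX, hVX⟩ : ∃ X, ρ.IsSimpleSubquotient Q X ⊥ ∧ ∀ A B, ρ.IsSimpleSubquotient H A B →
      ∃ A' B', ρ.IsSimpleSubquotient H A' B' ∧ ρ.SubquotientIso H A B A' B' ∧ A' ≤ X := by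
    rcases hcl with hirr | ⟨U, hU, -, f, hf, hker, hrange⟩
    · exact ⟨⊤, ⟨IsStable.top, IsStable.bot, hV, fun W _ _ hW => hirr W hW⟩,
        fun A B hs => ⟨A, B, hs, SubquotientIso.refl hs.isStable_right, le_top⟩⟩
    · exact ⟨U, hU, fun A B hs => hs.exists_iso_le_of_range_le (hU.isStable_left.mono hHQ)
        (hf.mono hHQ) hker.le hrange.le⟩
  obtain ⟨Z₁, Z₂, hZ₁, hZ₂, htypes⟩ := exists_forall_subquotientIso_or_of_commute hHK hQ hX
  refine ⟨Z₁, Z₂, hZ₁, hZ₂, fun A B hs => ?_⟩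
  obtain ⟨A', B', hs', hi, hA'⟩ := hVX A B hs
  exact (htypes A' B' hs' hA').imp (hi.trans hs'.isStable_left) (hi.trans hs'.isStable_left)

end Representation

open Equiv Equiv.Perm Pointwise

lemma Equiv.Perm.apply_mem_iff_of_forall_not_mem {α : Type*} {s : Set α} {g : Perm α}
    (hg : ∀ y ∉ s, g y = y) (x : α) : g x ∈ s ↔ x ∈ s := by
  refine ⟨fun hgx => ?_, fun hx => ?_⟩
  · by_contra hx
    exact hx (hg x hx ▸ hgx)
  · by_contra hgx
    rw [g.injective (hg _ hgx)] at hgx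
    exact hgx hx

lemma Nat.div_eq_div_iff_lt_iff_lt {a x y : ℕ} (hx : x < 2 * a) (hy : y < 2 * a) :
    x / a = y / a ↔ (x < a ↔ y < a) := by
  have hx' : x / a < 2 := Nat.div_lt_of_lt_mul (by omega)
  have hy' : y / a < 2 := Nat.div_lt_of_lt_mul (by omega)
  have hx0 : x / a = 0 ↔ x < a := by rw [Nat.div_eq_zero_iff]; omega
  have hy0 : y / a = 0 ↔ y < a := by rw [Nat.div_eq_zero_iff]; omega
  generalize x / a = p at *
  generalize y / a = q at *
  omega

lemma isIndexTwo_alternatingGroup_inf {α : Type*} [Fintype α] [DecidableEq α]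
    (W : Subgroup (Perm α)) {τ : Perm α} (hτW : τ ∈ W) (hτ : sign τ = -1) (hττ : τ * τ = 1) :
    Representation.IsIndexTwo ↑(alternatingGroup α ⊓ W) W τ where
  subset _ hg := hg.2
  mem := hτW
  mul_self := hττ
  conj_mem g hg := ⟨by simp [mem_alternatingGroup.1 hg.1, hτ], W.mul_mem (W.mul_mem hτW hg.2) hτW⟩
  mem_or_mul_mem g hg := by
    rcases Int.units_eq_one_or (sign g) with h | h
    · exact Or.inl ⟨h, hg⟩
    · exact Or.inr ⟨by simp [mem_alternatingGroup, h, hτ], W.mul_mem hτW hg⟩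

namespace BlockPerm

variable {a : ℕ}

def wreathSubgroup (a : ℕ) : Subgroup (Perm (Fin (2 * a))) where
  carrier := {σ | wreathPres (2 * a) a σ}
  mul_mem' hg hh x y := (hh x y).trans (hg _ _)
  one_mem' _ _ := Iff.rfl
  inv_mem' {g} hg x y := by simpa using (hg (g⁻¹ x) (g⁻¹ y)).symm

lemma mem_wreathSubgroup_iff {g : Perm (Fin (2 * a))} :
    g ∈ wreathSubgroup a ↔ ∀ x y : Fin (2 * a),
      (((x : ℕ) < a ↔ (y : ℕ) < a) ↔ ((g x : ℕ) < a ↔ (g y : ℕ) < a)) := by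
  change (∀ x y, _) ↔ _
  simp only [Nat.div_eq_div_iff_lt_iff_lt (Fin.is_lt _) (Fin.is_lt _)]

def firstBlock (a : ℕ) : Subgroup (Perm (Fin (2 * a))) :=
  fixingSubgroup (Perm (Fin (2 * a))) {x : Fin (2 * a) | a ≤ (x : ℕ)}

def secondBlock (a : ℕ) : Subgroup (Perm (Fin (2 * a))) :=
  fixingSubgroup (Perm (Fin (2 * a))) {x : Fin (2 * a) | (x : ℕ) < a}

lemma mem_firstBlock_iff {g : Perm (Fin (2 * a))} :
    g ∈ firstBlock a ↔ ∀ x : Fin (2 * a), a ≤ (x : ℕ) → g x = x := by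
  simp [firstBlock, mem_fixingSubgroup_iff, Perm.smul_def]

lemma mem_secondBlock_iff {g : Perm (Fin (2 * a))} :
    g ∈ secondBlock a ↔ ∀ x : Fin (2 * a), (x : ℕ) < a → g x = x := by
  simp [secondBlock, mem_fixingSubgroup_iff, Perm.smul_def]

lemma coe_firstBlock : (firstBlock a : Set (Perm (Fin (2 * a)))) = {g | saFix (2 * a) a g} :=
  Set.ext fun _ => mem_firstBlock_iff

lemma apply_lt_iff_of_mem_firstBlock {h : Perm (Fin (2 * a))} (hh : h ∈ firstBlock a)
    (x : Fin (2 * a)) : (h x : ℕ) < a ↔ (x : ℕ) < a :=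
  apply_mem_iff_of_forall_not_mem (s := {x : Fin (2 * a) | (x : ℕ) < a})
    (fun y hy => mem_firstBlock_iff.1 hh y (not_lt.1 hy)) x

lemma apply_lt_iff_of_mem_secondBlock {k : Perm (Fin (2 * a))} (hk : k ∈ secondBlock a)
    (x : Fin (2 * a)) : (k x : ℕ) < a ↔ (x : ℕ) < a := by
  have h := apply_mem_iff_of_forall_not_mem (s := {x : Fin (2 * a) | a ≤ (x : ℕ)})
    (fun y hy => mem_secondBlock_iff.1 hk y (not_le.1 hy)) x
  simpa only [Set.mem_ofPred_eq, not_le] using not_congr h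

lemma firstBlock_commute_secondBlock :
    ∀ h ∈ firstBlock a, ∀ k ∈ secondBlock a, Commute h k := by
  intro h hh k hk
  refine Disjoint.commute fun x => ?_
  rw [mem_firstBlock_iff] at hh
  rw [mem_secondBlock_iff] at hk
  by_cases hx : (x : ℕ) < a
  · exact Or.inr (hk x hx)
  · exact Or.inl (hh x (not_lt.1 hx))

lemma mem_firstBlock_mul_secondBlock_iff {g : Perm (Fin (2 * a))} :
    g ∈ (firstBlock a : Set (Perm (Fin (2 * a)))) * (secondBlock a : Set (Perm (Fin (2 * a)))) ↔
      ∀ x : Fin (2 * a), (g x : ℕ) < a ↔ (x : ℕ) < a := by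
  constructor
  · rintro ⟨h, hh, k, hk, rfl⟩ x
    rw [Perm.mul_apply, apply_lt_iff_of_mem_firstBlock hh, apply_lt_iff_of_mem_secondBlock hk]
  · intro hg
    classical
    set h := ofSubtype (g.subtypePerm (p := fun x : Fin (2 * a) => (x : ℕ) < a) hg)
    have hh : h ∈ firstBlock a := by
      rw [mem_firstBlock_iff]
      exact fun y hy => ofSubtype_apply_of_not_mem _ (not_lt.2 hy)
    have hk : h⁻¹ * g ∈ secondBlock a := by
      rw [mem_secondBlock_iff]
      intro y hy
      rw [Perm.mul_apply, Perm.inv_eq_iff_eq]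
      exact (ofSubtype_apply_of_mem (g.subtypePerm hg) hy).symm
    exact ⟨h, hh, h⁻¹ * g, hk, mul_inv_cancel_left h g⟩

def blockSwap (a : ℕ) : Perm (Fin (2 * a)) :=
  Function.Involutive.toPerm
    (fun x => ⟨if (x : ℕ) < a then x + a else x - a, by have := x.2; split_ifs <;> omega⟩)
    (fun x => by ext; have := x.2; simp only; split_ifs <;> omega)

lemma blockSwap_val (x : Fin (2 * a)) :
    (blockSwap a x : ℕ) = if (x : ℕ) < a then x + a else x - a := rfl

lemma blockSwap_lt_iff (x : Fin (2 * a)) : (blockSwap a x : ℕ) < a ↔ ¬ (x : ℕ) < a := by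
  rw [blockSwap_val]
  split_ifs <;> omega

lemma blockSwap_mul_self : blockSwap a * blockSwap a = 1 := by
  ext x
  rw [Perm.mul_apply, blockSwap_val, blockSwap_val, Perm.one_apply]
  have := x.2
  split_ifs <;> omega

lemma isIndexTwo_blockSwap :
    Representation.IsIndexTwo ((firstBlock a : Set (Perm (Fin (2 * a)))) * (secondBlock a : Set _))
      (wreathSubgroup a) (blockSwap a) where
  subset g hg := by
    rw [mem_firstBlock_mul_secondBlock_iff] at hg
    rw [SetLike.mem_coe, mem_wreathSubgroup_iff]
    intro x y
    rw [hg x, hg y]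
  mem := by
    rw [SetLike.mem_coe, mem_wreathSubgroup_iff]
    intro x y
    rw [blockSwap_lt_iff, blockSwap_lt_iff]
    tauto
  mul_self := blockSwap_mul_self
  conj_mem g hg := by
    rw [mem_firstBlock_mul_secondBlock_iff] at hg ⊢
    intro x
    simp only [Perm.mul_apply, blockSwap_lt_iff, hg, not_not]
  mem_or_mul_mem g hg := by
    rw [SetLike.mem_coe, mem_wreathSubgroup_iff] at hg
    simp only [mem_firstBlock_mul_secondBlock_iff, Perm.mul_apply, blockSwap_lt_iff]
    by_cases h : ∀ x : Fin (2 * a), (g x : ℕ) < a ↔ (x : ℕ) < a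
    · exact Or.inl h
    · obtain ⟨x₀, hx₀⟩ := not_forall.1 h
      exact Or.inr fun x => by have := hg x x₀; tauto

lemma exists_isIndexTwo_alternatingGroup (ha : 2 ≤ a) : ∃ τ : Perm (Fin (2 * a)),
    Representation.IsIndexTwo (alternatingGroup (Fin (2 * a)) : Set _) Set.univ τ ∧
    Representation.IsIndexTwo ↑(alternatingGroup (Fin (2 * a)) ⊓ wreathSubgroup a)
      (wreathSubgroup a) τ := by
  have h01 : (⟨0, by omega⟩ : Fin (2 * a)) ≠ ⟨1, by omega⟩ := Fin.ne_of_val_ne (by simp)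
  refine ⟨swap _ _, ?_, isIndexTwo_alternatingGroup_inf _ ?_ (sign_swap h01) (swap_mul_self _ _)⟩
  · simpa using isIndexTwo_alternatingGroup_inf ⊤ (Subgroup.mem_top _) (sign_swap h01)
      (swap_mul_self _ _)
  · refine isIndexTwo_blockSwap.subset (Set.subset_mul_left _ (secondBlock a).one_mem ?_)
    rw [SetLike.mem_coe, mem_firstBlock_iff]
    exact fun x hx => swap_apply_of_ne_of_ne (Fin.ne_of_val_ne (by simp; omega))
      (Fin.ne_of_val_ne (by simp; omega))

end BlockPerm

open Representation BlockPerm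

theorem stmt_18_general (F : Type) [Field F] [CharP F 2]
    (a n : ℕ) (ha : 2 ≤ a) (hn : n = 2 * a)
    (V : Type) [AddCommGroup V] [Module F V]
    (ρ : Representation F (Equiv.Perm (Fin n)) V)
    (hirr : ∀ W : Submodule F V, (∀ g : Equiv.Perm (Fin n), ∀ v ∈ W, ρ g v ∈ W) →
      W = ⊥ ∨ W = ⊤)
    (Ep : Submodule F V)
    (hEpinv : ∀ g ∈ alternatingGroup (Fin n), ∀ v ∈ Ep, ρ g v ∈ Ep)
    (hEpbot : Ep ≠ ⊥)
    (hrestr : ∀ W : Submodule F V, W ≤ Ep →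
      (∀ g ∈ alternatingGroup (Fin n), wreathPres n a g → ∀ v ∈ W, ρ g v ∈ W) →
      W = ⊥ ∨ W = Ep) :
    -- `D^λ↓_{S_a ≀ S_2}` is irreducible, or has exactly two composition factors,
    -- isomorphic to each other:
    ((∀ W : Submodule F V, (∀ g : Equiv.Perm (Fin n), wreathPres n a g → ∀ v ∈ W, ρ g v ∈ W) →
        W = ⊥ ∨ W = ⊤)
      ∨ (∃ U : Submodule F V,
          (∀ g : Equiv.Perm (Fin n), wreathPres n a g → ∀ v ∈ U, ρ g v ∈ U) ∧
          U ≠ ⊥ ∧ U ≠ ⊤ ∧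
          (∀ W : Submodule F V, W ≤ U →
            (∀ g : Equiv.Perm (Fin n), wreathPres n a g → ∀ v ∈ W, ρ g v ∈ W) →
            W = ⊥ ∨ W = U) ∧
          (∀ W : Submodule F V, U ≤ W →
            (∀ g : Equiv.Perm (Fin n), wreathPres n a g → ∀ v ∈ W, ρ g v ∈ W) →
            W = U ∨ W = ⊤) ∧
          ∃ e : (V ⧸ U) ≃ₗ[F] ↥U, ∀ g : Equiv.Perm (Fin n), wreathPres n a g →
            ∀ v : V, ((e (Submodule.Quotient.mk (ρ g v)) : ↥U) : V)
              = ρ g ((e (Submodule.Quotient.mk v) : ↥U) : V))) ∧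
    -- `D^λ↓_{S_a}` has at most two isomorphism classes of composition factors: among any
    -- three simple `S_a`-subquotients, two are `S_a`-equivariantly isomorphic:
    (∀ A B : Fin 3 → Submodule F V,
      (∀ i, B i ≤ A i) →
      (∀ i, ∀ g : Equiv.Perm (Fin n), saFix n a g → ∀ v ∈ A i, ρ g v ∈ A i) →
      (∀ i, ∀ g : Equiv.Perm (Fin n), saFix n a g → ∀ v ∈ B i, ρ g v ∈ B i) →
      (∀ i, B i ≠ A i) →
      (∀ i, ∀ W : Submodule F V, B i ≤ W → W ≤ A i →
        (∀ g : Equiv.Perm (Fin n), saFix n a g → ∀ v ∈ W, ρ g v ∈ W) →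
        W = B i ∨ W = A i) →
      ∃ i j : Fin 3, i ≠ j ∧
        ∃ e : (↥(A i) ⧸ (B i).comap (A i).subtype) ≃ₗ[F]
              (↥(A j) ⧸ (B j).comap (A j).subtype),
          ∀ g : Equiv.Perm (Fin n), saFix n a g →
            ∀ (v w : V) (hv : v ∈ A i) (hw : w ∈ A j)
              (hv' : ρ g v ∈ A i) (hw' : ρ g w ∈ A j),
              e (Submodule.Quotient.mk ⟨v, hv⟩) = Submodule.Quotient.mk ⟨w, hw⟩ →
              e (Submodule.Quotient.mk ⟨ρ g v, hv'⟩) = Submodule.Quotient.mk ⟨ρ g w, hw'⟩) := by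
  subst hn
  have hirr' (W : Submodule F V) (hW : ρ.IsStable Set.univ W) : W = ⊥ ∨ W = ⊤ :=
    hirr W fun g => hW g trivial
  obtain ⟨v, -, hv⟩ := (Submodule.ne_bot_iff Ep).1 hEpbot
  have := finiteDimensional_of_irreducible hirr' hv
  obtain ⟨τ, hτS, hτW⟩ := exists_isIndexTwo_alternatingGroup ha
  have hE : ρ.IsSimpleSubquotient ↑(alternatingGroup (Fin (2 * a)) ⊓ wreathSubgroup a) Ep ⊥ :=
    ⟨fun g hg => hEpinv g hg.1, IsStable.bot, bot_lt_iff_ne_bot.2 hEpbot,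
      fun W _ hW hWs => hrestr W hW fun g hg hg' => hWs g ⟨hg, hg'⟩⟩
  have hτE : Ep ⊔ Ep.map (ρ τ) = ⊤ := (hirr' _ (hτS.isStable_sup_map hEpinv)).resolve_left
    (ne_bot_of_le_ne_bot hEpbot le_sup_left)
  have hcl := hτW.isSimpleOrTwoIsoFactors hE hτE
  refine ⟨hcl.imp_right fun ⟨U, hU, hVU, f, hf, hker, hrange⟩ =>
      ⟨U, hU.isStable_left, hU.lt.ne', hVU.lt.ne, fun W hW hWs => hU.eq_or_eq W bot_le hW hWs,
        fun W hW hWs => hVU.eq_or_eq W hW le_top hWs,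
        exists_quotientEquiv_of_ker_eq_range hf hker hrange⟩,
    fun A B hBA hA hB hne hmax => ?_⟩
  obtain ⟨Z₁, Z₂, hZ₁, hZ₂, htypes⟩ := hcl.exists_forall_subquotientIso_or
    (bot_lt_iff_ne_bot.2 (ne_bot_of_le_ne_bot hEpbot le_top)) firstBlock_commute_secondBlock
    isIndexTwo_blockSwap
  rw [coe_firstBlock] at hZ₁ hZ₂ htypes
  exact exists_ne_subquotientIso hZ₁ hZ₂ htypes A B
    fun i => ⟨hA i, hB i, lt_of_le_of_ne (hBA i) (hne i), hmax i⟩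

/-- Let `p = 2`, `n = 2a`, and let `D^λ` (for `λ ∈ P^A_2(n)`) be an irreducible
`F S_n`-module whose restriction to `A_n` splits as `E^λ_+ ⊕ E^λ_−` with `E^λ_±`
irreducible `A_n`-modules.  If `E^λ_+` restricted to `G_{a,2} = (S_a ≀ S_2) ∩ A_n` is
irreducible, then `D^λ` restricted to `S_a ≀ S_2` is either irreducible or has exactly two
composition factors which are isomorphic to each other; consequently `D^λ` restricted to
`S_a` has at most two isomorphism classes of composition factors. -/
theorem stmt_18 (F : Type) [Field F] [IsAlgClosed F] [CharP F 2]
    (a n : ℕ) (ha : 2 ≤ a) (hn : n = 2 * a)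
    (V : Type) [AddCommGroup V] [Module F V]
    (ρ : Representation F (Equiv.Perm (Fin n)) V)
    (hirr : ∀ W : Submodule F V, (∀ g : Equiv.Perm (Fin n), ∀ v ∈ W, ρ g v ∈ W) →
      W = ⊥ ∨ W = ⊤)
    (Ep Em : Submodule F V)
    (hEpinv : ∀ g ∈ alternatingGroup (Fin n), ∀ v ∈ Ep, ρ g v ∈ Ep)
    (hEminv : ∀ g ∈ alternatingGroup (Fin n), ∀ v ∈ Em, ρ g v ∈ Em)
    (hEpbot : Ep ≠ ⊥) (hEmbot : Em ≠ ⊥) (hdisj : Ep ⊓ Em = ⊥) (hsup : Ep ⊔ Em = ⊤)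
    (hEpirr : ∀ W : Submodule F V, W ≤ Ep →
      (∀ g ∈ alternatingGroup (Fin n), ∀ v ∈ W, ρ g v ∈ W) → W = ⊥ ∨ W = Ep)
    (hEmirr : ∀ W : Submodule F V, W ≤ Em →
      (∀ g ∈ alternatingGroup (Fin n), ∀ v ∈ W, ρ g v ∈ W) → W = ⊥ ∨ W = Em)
    (hrestr : ∀ W : Submodule F V, W ≤ Ep →
      (∀ g ∈ alternatingGroup (Fin n), wreathPres n a g → ∀ v ∈ W, ρ g v ∈ W) →
      W = ⊥ ∨ W = Ep) :
    -- `D^λ↓_{S_a ≀ S_2}` is irreducible, or has exactly two composition factors,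
    -- isomorphic to each other:
    ((∀ W : Submodule F V, (∀ g : Equiv.Perm (Fin n), wreathPres n a g → ∀ v ∈ W, ρ g v ∈ W) →
        W = ⊥ ∨ W = ⊤)
      ∨ (∃ U : Submodule F V,
          (∀ g : Equiv.Perm (Fin n), wreathPres n a g → ∀ v ∈ U, ρ g v ∈ U) ∧
          U ≠ ⊥ ∧ U ≠ ⊤ ∧
          (∀ W : Submodule F V, W ≤ U →
            (∀ g : Equiv.Perm (Fin n), wreathPres n a g → ∀ v ∈ W, ρ g v ∈ W) →
            W = ⊥ ∨ W = U) ∧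
          (∀ W : Submodule F V, U ≤ W →
            (∀ g : Equiv.Perm (Fin n), wreathPres n a g → ∀ v ∈ W, ρ g v ∈ W) →
            W = U ∨ W = ⊤) ∧
          ∃ e : (V ⧸ U) ≃ₗ[F] ↥U, ∀ g : Equiv.Perm (Fin n), wreathPres n a g →
            ∀ v : V, ((e (Submodule.Quotient.mk (ρ g v)) : ↥U) : V)
              = ρ g ((e (Submodule.Quotient.mk v) : ↥U) : V))) ∧
    -- `D^λ↓_{S_a}` has at most two isomorphism classes of composition factors: among any
    -- three simple `S_a`-subquotients, two are `S_a`-equivariantly isomorphic: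
    (∀ A B : Fin 3 → Submodule F V,
      (∀ i, B i ≤ A i) →
      (∀ i, ∀ g : Equiv.Perm (Fin n), saFix n a g → ∀ v ∈ A i, ρ g v ∈ A i) →
      (∀ i, ∀ g : Equiv.Perm (Fin n), saFix n a g → ∀ v ∈ B i, ρ g v ∈ B i) →
      (∀ i, B i ≠ A i) →
      (∀ i, ∀ W : Submodule F V, B i ≤ W → W ≤ A i →
        (∀ g : Equiv.Perm (Fin n), saFix n a g → ∀ v ∈ W, ρ g v ∈ W) →
        W = B i ∨ W = A i) →
      ∃ i j : Fin 3, i ≠ j ∧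
        ∃ e : (↥(A i) ⧸ (B i).comap (A i).subtype) ≃ₗ[F]
              (↥(A j) ⧸ (B j).comap (A j).subtype),
          ∀ g : Equiv.Perm (Fin n), saFix n a g →
            ∀ (v w : V) (hv : v ∈ A i) (hw : w ∈ A j)
              (hv' : ρ g v ∈ A i) (hw' : ρ g w ∈ A j),
              e (Submodule.Quotient.mk ⟨v, hv⟩) = Submodule.Quotient.mk ⟨w, hw⟩ →
              e (Submodule.Quotient.mk ⟨ρ g v, hv'⟩) = Submodule.Quotient.mk ⟨ρ g w, hw'⟩) :=
  stmt_18_general F a n ha hn V ρ hirr Ep hEpinv hEpbot hrestr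
end
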